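/- arXiv:2202.03823 — 3 statements merged into one kernel-verified Lean document; each statement's English description precedes it below -/
import Mathlib

section
/- Let n ≥ 2, s₁, s₂ ∈ (0,1), σ ∈ ℝ, and let K₁*(ζ) = a₁(ζ/|ζ|)/|ζ|^{n+s₁}, K₂*(ζ) = a₂(ζ/|ζ|)/|ζ|^{n+s₂} with a₁, a₂ continuous on the unit sphere, bounded above and below by positive constants and even. Assume that either s₁ = s₂ or σ = 0. Let H and V be open half-spaces and let θ ∈ (0,π) be the angle between H and V, i.e. H ∩ V = J_{0,θ}. Suppose there exists v ∈ H ∩ ∂V such that H^{K₁*}_{∂(H∩V)}(v) − ∫_{Hᶜ} K₁*(v−z) dz + σ ∫_{Hᶜ} K₂*(v−z) dz = 0. Then θ and σ satisfy the relation ∫_{J_{θ,π}} a₁((e(θ)−x)/|e(θ)−x|) |e(θ)−x|^{−(n+s₁)} dx − ∫_{J_{0,θ}} a₁((e(θ)−x)/|e(θ)−x|) |e(θ)−x|^{−(n+s₁)} dx + σ ∫_{Hᶜ} a₂((e(θ)−x)/|e(θ)−x|) |e(θ)−x|^{−(n+s₁)} dx = 0, the first two integrals being understood jointly in the principal value sense.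 -/
open Set MeasureTheory Metric Filter Bornology
open scoped ENNReal NNReal Topology symmDiff RealInnerProductSpace

noncomputable section

/-- The ambient Euclidean space `ℝⁿ`, with `n = d + 2 ≥ 2`. -/
abbrev V (d : ℕ) : Type := EuclideanSpace ℝ (Fin (d + 2))

namespace Capillarity

variable {d : ℕ}

/-- The interaction `I_K(A,B) = ∫_A ∫_B K(x-y) dx dy`, as an extended nonnegative value. -/
def interE (K : V d → ℝ) (A B : Set (V d)) : ℝ≥0∞ :=
  ∫⁻ p in A ×ˢ B, ENNReal.ofReal (K (p.1 - p.2))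

/-- The kernel class `𝐊(n, s, λ, ϱ)`. -/
def memK (s lam : ℝ) (ϱ : ℝ≥0∞) (K : V d → ℝ) : Prop :=
  Measurable K ∧ (∀ ζ, K (-ζ) = K ζ) ∧ (∀ ζ, 0 ≤ K ζ) ∧
  (∀ ζ : V d, ζ ≠ 0 → (‖ζ‖₊ : ℝ≥0∞) < ϱ →
      1 / (lam * ‖ζ‖ ^ ((d : ℝ) + 2 + s)) ≤ K ζ) ∧
  (∀ ζ : V d, ζ ≠ 0 → K ζ ≤ lam / ‖ζ‖ ^ ((d : ℝ) + 2 + s))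

/-- The kernel class `𝐊^h(n, s, λ, ϱ)`. -/
def memKC (h : ℕ) (s lam : ℝ) (ϱ : ℝ≥0∞) (K : V d → ℝ) : Prop :=
  memK s lam ϱ K ∧ ContDiffOn ℝ h K {(0 : V d)}ᶜ ∧
  ∀ j : ℕ, 1 ≤ j → j ≤ h → ∀ ζ : V d, ζ ≠ 0 →
    ‖iteratedFDerivWithin ℝ j K {(0 : V d)}ᶜ ζ‖ ≤ lam / ‖ζ‖ ^ ((d : ℝ) + 2 + s + j)

/-- The capillarity energy `𝒞(A) = I_{K₁}(A, Aᶜ ∩ Ω) + σ I_{K₂}(A, Ωᶜ) + ∫_A g`,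
real-valued version. -/
def energyR (K₁ K₂ : V d → ℝ) (σ : ℝ) (Ω : Set (V d)) (g : V d → ℝ) (A : Set (V d)) : ℝ :=
  (interE K₁ A (Ω \ A)).toReal + σ * (interE K₂ A Ωᶜ).toReal + ∫ x in A, g x

/-- The capillarity energy, with values in `EReal` (the first interaction may be `+∞`). -/
def energyE (K₁ K₂ : V d → ℝ) (σ : ℝ) (Ω : Set (V d)) (g : V d → ℝ) (A : Set (V d)) : EReal :=
  ((interE K₁ A (Ω \ A)).toEReal) + ((σ * (interE K₂ A Ωᶜ).toReal + ∫ x in A, g x : ℝ) : EReal)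

/-- A volume-constrained minimizer of the capillarity energy among subsets of `Ω`. -/
def IsVolConstrMinimizer (K₁ K₂ : V d → ℝ) (σ : ℝ) (Ω : Set (V d)) (g : V d → ℝ)
    (E : Set (V d)) : Prop :=
  E ⊆ Ω ∧ MeasurableSet E ∧
  ∀ F : Set (V d), F ⊆ Ω → MeasurableSet F → volume F = volume E →
    energyE K₁ K₂ σ Ω g E ≤ energyE K₁ K₂ σ Ω g F

/-- A family of compactly supported diffeomorphisms of `ℝⁿ` with `f 0 = Id`. -/
def IsDiffeoFlow (δ : ℝ) (f : ℝ → V d → V d) : Prop :=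
  (∀ x, f 0 x = x) ∧
  ∀ t : ℝ, |t| < δ →
    Function.Bijective (f t) ∧ ContDiff ℝ (⊤ : ℕ∞) (f t) ∧
    ContDiff ℝ (⊤ : ℕ∞) (Function.invFun (f t)) ∧
    ∃ R : ℝ, ∀ x : V d, R ≤ ‖x‖ → f t x = x

/-- A volume-constrained critical point of the capillarity energy. -/
def IsVolConstrCritical (K₁ K₂ : V d → ℝ) (σ : ℝ) (Ω : Set (V d)) (g : V d → ℝ)
    (E : Set (V d)) : Prop :=
  E ⊆ Ω ∧ MeasurableSet E ∧
  ∀ (δ : ℝ) (f : ℝ → V d → V d), 0 < δ → IsDiffeoFlow δ f →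
    (∀ t : ℝ, |t| < δ → f t '' Ω = Ω ∧ volume (f t '' E) = volume E) →
    HasDerivAt (fun t => energyR K₁ K₂ σ Ω g (f t '' E)) 0 0

/-- `Ω` has boundary of class `C¹`: near every boundary point it admits a `C¹`
defining function with nonvanishing differential. -/
def HasC1Boundary (Ω : Set (V d)) : Prop :=
  ∀ p ∈ frontier Ω, ∃ r > 0, ∃ φ : V d → ℝ, ContDiff ℝ 1 φ ∧
    (∀ x ∈ ball p r, fderiv ℝ φ x ≠ 0) ∧ (∀ x ∈ ball p r, (x ∈ Ω ↔ φ x < 0))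

/-- `ν` is the outer unit normal of `Ω` at the boundary point `p`. -/
def IsOuterNormalAt (Ω : Set (V d)) (p ν : V d) : Prop :=
  ∃ r > 0, ∃ φ : V d → ℝ, ContDiff ℝ 1 φ ∧ (∀ x ∈ ball p r, (x ∈ Ω ↔ φ x < 0)) ∧
    gradient φ p ≠ 0 ∧ ν = ‖gradient φ p‖⁻¹ • gradient φ p

/-- A function of class `C^{1,α}`: `C¹` with `α`-Hölder continuous differential. -/
def C1Holder {W : Type*} [NormedAddCommGroup W] [NormedSpace ℝ W] (α : ℝ) (u : W → ℝ) : Prop :=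
  ContDiff ℝ 1 u ∧ ∃ C : ℝ≥0, HolderWith C α.toNNReal (fderiv ℝ u)

/-- Orthogonal projection of `x` onto the affine hyperplane through `p` with normal `ν`. -/
def projHyp (ν p x : V d) : V d := x - ⟪x - p, ν⟫ • ν

/-- `S` is a hypersurface of class `C^{1,α}`, possibly with boundary, and the boundary
(if any) is contained in `B`: locally `S` is a `C^{1,α}` graph or half-graph. -/
def IsC1AlphaSurfaceWithBdryIn (α : ℝ) (S B : Set (V d)) : Prop :=
  ∀ p ∈ S, ∃ r > 0, ∃ ν : V d, ‖ν‖ = 1 ∧ ∃ u : V d → ℝ, C1Holder α u ∧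
    (S ∩ ball p r = {x ∈ ball p r | ⟪x - p, ν⟫ = u (projHyp ν p x)} ∨
      ∃ h : V d → ℝ, ContDiff ℝ 1 h ∧
        S ∩ ball p r = {x ∈ ball p r | ⟪x - p, ν⟫ = u (projHyp ν p x) ∧ h x ≤ 0} ∧
        {x ∈ ball p r | ⟪x - p, ν⟫ = u (projHyp ν p x) ∧ h x = 0} ⊆ B)

/-- The set `Reg_E` of regular points of `∂E` relative to `Ω`. -/
def RegE (s₁ : ℝ) (Ω E : Set (V d)) : Set (V d) :=
  {x₀ | x₀ ∈ closure (Ω ∩ frontier E) ∧ ∃ ρ > 0, ∃ α : ℝ, s₁ < α ∧ α < 1 ∧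
    IsC1AlphaSurfaceWithBdryIn α (ball x₀ ρ ∩ frontier E) (frontier Ω)}

/-- The principal value `p.v. ∫ K(x-y)(χ_{Fᶜ}(y) - χ_F(y)) dy` exists and equals `L`. -/
def HasPV (K : V d → ℝ) (F : Set (V d)) (x : V d) (L : ℝ) : Prop :=
  Tendsto (fun ρ : ℝ => ∫ y in {y : V d | ρ ≤ dist x y},
      (Set.indicator Fᶜ (fun _ => (1 : ℝ)) y - Set.indicator F (fun _ => (1 : ℝ)) y) * K (x - y))
    (𝓝[>] 0) (𝓝 L)

/-- The `K`-mean curvature `H^K_{∂F}(x)`, as a principal value. -/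
def meanCurv (K : V d → ℝ) (F : Set (V d)) (x : V d) : ℝ :=
  limUnder (𝓝[>] (0 : ℝ)) fun ρ : ℝ => ∫ y in {y : V d | ρ ≤ dist x y},
      (Set.indicator Fᶜ (fun _ => (1 : ℝ)) y - Set.indicator F (fun _ => (1 : ℝ)) y) * K (x - y)

/-- The blow-up `F^{x₀,r} = (F - x₀)/r`. -/
def blowup (F : Set (V d)) (x₀ : V d) (r : ℝ) : Set (V d) := (fun x => r⁻¹ • (x - x₀)) '' F

/-- Convergence of sets in `L¹_loc(ℝⁿ)`. -/
def TendstoL1loc {ι : Type*} (l : Filter ι) (F : ι → Set (V d)) (G : Set (V d)) : Prop :=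
  ∀ R : ℝ, 0 < R → Tendsto (fun i => volume ((F i ∆ G) ∩ ball (0 : V d) R)) l (𝓝 0)

/-- `H` is an open half-space of `ℝⁿ`. -/
def IsOpenHalfSpace (H : Set (V d)) : Prop :=
  ∃ (ν : V d) (c : ℝ), ν ≠ 0 ∧ H = {x | c < ⟪x, ν⟫}

/-- The first vector of the canonical basis. -/
def e1 (d : ℕ) : V d := EuclideanSpace.single 0 1

/-- The last vector of the canonical basis. -/
def eN (d : ℕ) : V d := EuclideanSpace.single (Fin.last (d + 1)) 1

/-- The last coordinate `x_n`. -/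
def lastCoord (x : V d) : ℝ := x (Fin.last (d + 1))

/-- The first coordinate `x₁`. -/
def firstCoord (x : V d) : ℝ := x 0

/-- The cone `J_{θ₁,θ₂}` of points whose `(x₁,x_n)` lies in the planar sector of
angles `(θ₁, θ₂)`. -/
def Jcone (d : ℕ) (θ₁ θ₂ : ℝ) : Set (V d) :=
  {x | ∃ β ∈ Ioo θ₁ θ₂, ∃ ρ : ℝ, 0 < ρ ∧
    firstCoord x = ρ * Real.cos β ∧ lastCoord x = ρ * Real.sin β}

/-- The unit vector `e(α) = cos α e₁ + sin α e_n`. -/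
def eAng (d : ℕ) (α : ℝ) : V d := Real.cos α • e1 d + Real.sin α • eN d

/-- `z/|z|`. -/
def dir (z : V d) : V d := ‖z‖⁻¹ • z

/-- `a` is an admissible angular part: continuous on the unit sphere, bounded above and
below by positive constants, and even. -/
def IsAngular (a : V d → ℝ) : Prop :=
  ContinuousOn a (sphere (0 : V d) 1) ∧
  (∃ c₁ c₂ : ℝ, 0 < c₁ ∧ ∀ ω ∈ sphere (0 : V d) 1, c₁ ≤ a ω ∧ a ω ≤ c₂) ∧
  ∀ ω : V d, a (-ω) = a ω

/-- The anisotropic kernel `K*(ζ) = a(ζ/|ζ|)/|ζ|^{n+s}`. -/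
def Kstar (a : V d → ℝ) (s : ℝ) : V d → ℝ :=
  fun ζ => a (dir ζ) / ‖ζ‖ ^ ((d : ℝ) + 2 + s)

/-- `K` admits the blow-up limit `Ks`, i.e. `r^{n+s} K(rζ) → Ks(ζ)` as `r → 0⁺`. -/
def HasBlowupLimit (s : ℝ) (K Ks : V d → ℝ) : Prop :=
  ∀ ζ : V d, ζ ≠ 0 →
    Tendsto (fun r : ℝ => r ^ ((d : ℝ) + 2 + s) * K (r • ζ)) (𝓝[>] 0) (𝓝 (Ks ζ))

/-- The truncated (at scale `ρ`) version of the difference of cone integrals defining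
`𝒟_θ(θ̄)`. -/
def Dtrunc (d : ℕ) (a₁ : V d → ℝ) (s₁ θ θbar ρ : ℝ) : ℝ :=
  (∫ x in Jcone d θ (θ + θbar) \ ball (eAng d θ) ρ,
      a₁ (dir (x - eAng d θ)) / ‖x - eAng d θ‖ ^ ((d : ℝ) + 2 + s₁)) -
  ∫ x in Jcone d 0 θ \ ball (eAng d θ) ρ,
      a₁ (dir (x - eAng d θ)) / ‖x - eAng d θ‖ ^ ((d : ℝ) + 2 + s₁)

/-- The principal value `𝒟_θ(θ̄)` exists and equals `L`. -/
def HasDVal (d : ℕ) (a₁ : V d → ℝ) (s₁ θ θbar L : ℝ) : Prop :=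
  Tendsto (fun ρ => Dtrunc d a₁ s₁ θ θbar ρ) (𝓝[>] 0) (𝓝 L)

/-- The projection onto the first `n - 1` coordinates, `x ↦ x'`. -/
def projPrime (x : V d) : EuclideanSpace ℝ (Fin (d + 1)) :=
  (WithLp.equiv 2 (Fin (d + 1) → ℝ)).symm fun i => x i.castSucc

/-- The embedding `ȳ ↦ (0, ȳ, 0)` of `ℝ^{n-2}` into `ℝⁿ`. -/
def embMid (d : ℕ) (y : EuclideanSpace ℝ (Fin d)) : V d :=
  (WithLp.equiv 2 (Fin (d + 2) → ℝ)).symm fun i =>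
    if h : 0 < i.val ∧ i.val < d + 1 then y ⟨i.val - 1, by omega⟩ else 0

/-- The dimensionally reduced angular part `a^⋆`. -/
def aStar (d : ℕ) (a : V d → ℝ) (s x₁ x₂ : ℝ) : ℝ :=
  ∫ y : EuclideanSpace ℝ (Fin d),
    a (dir (x₁ • e1 d + x₂ • eN d + Real.sqrt (x₁ ^ 2 + x₂ ^ 2) • embMid d y)) *
      (1 + ‖y‖ ^ 2) ^ (-(((d : ℝ) + 2 + s) / 2))

/-- The angular density `φ(θ) = a^⋆(cos θ, sin θ)`. -/
def phiAng (d : ℕ) (a : V d → ℝ) (s θ : ℝ) : ℝ := aStar d a s (Real.cos θ) (Real.sin θ)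

/-- The contact angle equation: the (joint) principal value of the two cone integrals
exists and cancels the absolutely convergent half-space term. -/
def ContactAngleEq (d : ℕ) (a₁ a₂ : V d → ℝ) (s₁ σ θ : ℝ) : Prop :=
  Tendsto (fun ρ : ℝ =>
      (∫ x in Jcone d θ Real.pi \ ball (eAng d θ) ρ,
          a₁ (dir (eAng d θ - x)) / ‖eAng d θ - x‖ ^ ((d : ℝ) + 2 + s₁)) -
        ∫ x in Jcone d 0 θ \ ball (eAng d θ) ρ,
          a₁ (dir (eAng d θ - x)) / ‖eAng d θ - x‖ ^ ((d : ℝ) + 2 + s₁))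
    (𝓝[>] 0)
    (𝓝 (-(σ * ∫ x in {x : V d | lastCoord x ≤ 0},
        a₂ (dir (eAng d θ - x)) / ‖eAng d θ - x‖ ^ ((d : ℝ) + 2 + s₁))))

/-- The divergence of a vector field on `ℝⁿ`. -/
def diverg (W : V d → V d) (x : V d) : ℝ :=
  ∑ i, fderiv ℝ W x (EuclideanSpace.single i 1) i

/-- The divergence in `ℝ^{2n}` of a vector field on `ℝⁿ × ℝⁿ`. -/
def divergPair (W : V d × V d → V d × V d) (p : V d × V d) : ℝ :=
  (∑ i, (fderiv ℝ W p (EuclideanSpace.single i 1, (0 : V d))).1 i) +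
  ∑ i, (fderiv ℝ W p ((0 : V d), EuclideanSpace.single i 1)).2 i

/-- The `C^{1,α}` norm of `f` on the set `D`. -/
def c1aNormOn {W : Type*} [NormedAddCommGroup W] [NormedSpace ℝ W] (α : ℝ)
    (D : Set W) (f : W → ℝ) : ℝ :=
  (⨆ x : D, |f (x : W)|) + (⨆ x : D, ‖fderiv ℝ f (x : W)‖) +
    ⨆ p : D × D, ‖fderiv ℝ f (p.1 : W) - fderiv ℝ f (p.2 : W)‖ / ‖(p.1 : W) - (p.2 : W)‖ ^ α

end Capillarity
namespace Capillarity
variable {d : ℕ}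

lemma lastCoord_smul (c : ℝ) (x : V d) : lastCoord (c • x) = c * lastCoord x := rfl
lemma lastCoord_add (x y : V d) : lastCoord (x + y) = lastCoord x + lastCoord y := rfl
lemma lastCoord_sub (x y : V d) : lastCoord (x - y) = lastCoord x - lastCoord y := rfl
lemma firstCoord_smul (c : ℝ) (x : V d) : firstCoord (c • x) = c * firstCoord x := rfl
lemma firstCoord_add (x y : V d) : firstCoord (x + y) = firstCoord x + firstCoord y := rfl
lemma firstCoord_sub (x y : V d) : firstCoord (x - y) = firstCoord x - firstCoord y := rfl

lemma firstCoord_eAng (θ : ℝ) : firstCoord (eAng d θ) = Real.cos θ := by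
  have h0 : (0 : Fin (d + 2)) ≠ Fin.last (d + 1) := by
    simp [Fin.ext_iff, Fin.val_last]
  simp [eAng, firstCoord, e1, eN, firstCoord_add, firstCoord_smul,
    EuclideanSpace.single_apply, h0]

lemma lastCoord_eAng (θ : ℝ) : lastCoord (eAng d θ) = Real.sin θ := by
  have h0 : (Fin.last (d + 1) : Fin (d+2)) ≠ 0 := by
    simp [Fin.ext_iff, Fin.val_last]
  simp [eAng, lastCoord, e1, eN, lastCoord_add, lastCoord_smul,
    EuclideanSpace.single_apply, h0]

lemma exists_polar (x : V d) (hn : 0 < lastCoord x) :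
    ∃ β ∈ Set.Ioo 0 Real.pi, ∃ r : ℝ, 0 < r ∧ firstCoord x = r * Real.cos β ∧
      lastCoord x = r * Real.sin β ∧
      ∀ θ' : ℝ, Real.sin θ' * firstCoord x - Real.cos θ' * lastCoord x
        = r * Real.sin (θ' - β) := by
  set a := firstCoord x with ha
  set b := lastCoord x with hb
  set r := Real.sqrt (a ^ 2 + b ^ 2) with hr
  have hsum : (0:ℝ) < a ^ 2 + b ^ 2 := by positivity
  have hrpos : 0 < r := Real.sqrt_pos.2 hsum
  have hr2 : r ^ 2 = a ^ 2 + b ^ 2 := Real.sq_sqrt hsum.le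
  have haabs : |a| ≤ r := by
    rw [← Real.sqrt_sq_eq_abs, hr]
    exact Real.sqrt_le_sqrt (by nlinarith)
  have hd1 : -1 ≤ a / r := by
    rw [le_div_iff₀ hrpos]
    have := neg_abs_le a
    nlinarith
  have hd2 : a / r ≤ 1 := by
    rw [div_le_one hrpos]
    exact (le_abs_self a).trans haabs
  set β := Real.arccos (a / r) with hβ
  have hcos : Real.cos β = a / r := Real.cos_arccos hd1 hd2
  have hsin : Real.sin β = b / r := by
    rw [hβ, Real.sin_arccos]
    have h1 : 1 - (a / r) ^ 2 = b ^ 2 / r ^ 2 := by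
      field_simp
      nlinarith
    rw [h1, Real.sqrt_div (by positivity), Real.sqrt_sq hn.le, Real.sqrt_sq hrpos.le]
  have hbpos : 0 < Real.sin β := by rw [hsin]; positivity
  have hβmem : β ∈ Set.Icc 0 Real.pi := ⟨Real.arccos_nonneg _, Real.arccos_le_pi _⟩
  have hβ0 : 0 < β := by
    rcases eq_or_lt_of_le hβmem.1 with h | h
    · exfalso; rw [← h] at hbpos; simp at hbpos
    · exact h
  have hβπ : β < Real.pi := by
    rcases eq_or_lt_of_le hβmem.2 with h | h
    · exfalso; rw [h] at hbpos; simp at hbpos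
    · exact h
  refine ⟨β, ⟨hβ0, hβπ⟩, r, hrpos, ?_, ?_, ?_⟩
  · rw [hcos]; field_simp
  · rw [hsin]; field_simp
  · intro θ'
    rw [Real.sin_sub, hcos, hsin]
    field_simp

/-- The linear functional whose sign cuts out the cone. -/
def gth (θ : ℝ) (x : V d) : ℝ := Real.sin θ * firstCoord x - Real.cos θ * lastCoord x

lemma jcone_zero_eq {θ : ℝ} (hθ : θ ∈ Set.Ioo 0 Real.pi) :
    Jcone d 0 θ = {x : V d | 0 < lastCoord x ∧ 0 < gth θ x} := by
  ext x
  constructor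
  · rintro ⟨β, ⟨hβ0, hβθ⟩, ρ, hρ, h1, hn⟩
    have hβπ : β < Real.pi := hβθ.trans hθ.2
    have hsβ : 0 < Real.sin β := Real.sin_pos_of_pos_of_lt_pi hβ0 hβπ
    constructor
    · rw [hn]; positivity
    · have : gth θ x = ρ * Real.sin (θ - β) := by
        rw [gth, h1, hn, Real.sin_sub]; ring
      rw [this]
      have h1 : 0 < θ - β := by linarith
      have h2 : θ - β < Real.pi := by linarith [hθ.2]
      have := Real.sin_pos_of_pos_of_lt_pi h1 h2
      positivity
  · rintro ⟨hn, hg⟩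
    obtain ⟨β, ⟨hβ0, hβπ⟩, r, hr, h1, h2, h3⟩ := exists_polar x hn
    refine ⟨β, ⟨hβ0, ?_⟩, r, hr, h1, h2⟩
    by_contra hcon
    push_neg at hcon
    have hsin : 0 ≤ Real.sin (β - θ) :=
      Real.sin_nonneg_of_nonneg_of_le_pi (by linarith) (by linarith [hθ.1])
    have hval := h3 θ
    have hg' : 0 < Real.sin θ * firstCoord x - Real.cos θ * lastCoord x := hg
    rw [← neg_sub β θ, Real.sin_neg] at hval
    nlinarith

lemma jcone_pi_eq {θ : ℝ} (hθ : θ ∈ Set.Ioo 0 Real.pi) :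
    Jcone d θ Real.pi = {x : V d | 0 < lastCoord x ∧ gth θ x < 0} := by
  ext x
  constructor
  · rintro ⟨β, ⟨hβθ, hβπ⟩, ρ, hρ, h1, hn⟩
    have hβ0 : 0 < β := hθ.1.trans hβθ
    have hsβ : 0 < Real.sin β := Real.sin_pos_of_pos_of_lt_pi hβ0 hβπ
    constructor
    · rw [hn]; positivity
    · have hval : gth θ x = ρ * Real.sin (θ - β) := by
        rw [gth, h1, hn, Real.sin_sub]; ring
      rw [hval, ← neg_sub, Real.sin_neg]
      have h1 : 0 < β - θ := by linarith
      have h2 : β - θ < Real.pi := by linarith [hθ.1]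
      have := Real.sin_pos_of_pos_of_lt_pi h1 h2
      nlinarith
  · rintro ⟨hn, hg⟩
    obtain ⟨β, ⟨hβ0, hβπ⟩, r, hr, h1, h2, h3⟩ := exists_polar x hn
    refine ⟨β, ⟨?_, hβπ⟩, r, hr, h1, h2⟩
    by_contra hcon
    push_neg at hcon
    have hsin : 0 ≤ Real.sin (θ - β) :=
      Real.sin_nonneg_of_nonneg_of_le_pi (by linarith) (by linarith [hθ.2])
    have hval := h3 θ
    have hg' : Real.sin θ * firstCoord x - Real.cos θ * lastCoord x < 0 := hg
    nlinarith

lemma continuous_firstCoord : Continuous (firstCoord (d := d)) := by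
  exact (continuous_apply _).comp (PiLp.continuous_ofLp (p := 2) ..)

lemma continuous_lastCoord : Continuous (lastCoord (d := d)) := by
  exact (continuous_apply _).comp (PiLp.continuous_ofLp (p := 2) ..)

lemma continuous_gth (θ : ℝ) : Continuous (gth (d := d) θ) := by
  exact (continuous_const.mul continuous_firstCoord).sub
    (continuous_const.mul continuous_lastCoord)

lemma measurableSet_jcone_zero {θ : ℝ} (hθ : θ ∈ Set.Ioo 0 Real.pi) :
    MeasurableSet (Jcone d 0 θ) := by
  rw [jcone_zero_eq hθ]
  exact (measurableSet_lt measurable_const continuous_lastCoord.measurable).inter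
    (measurableSet_lt measurable_const (continuous_gth θ).measurable)

lemma measurableSet_jcone_pi {θ : ℝ} (hθ : θ ∈ Set.Ioo 0 Real.pi) :
    MeasurableSet (Jcone d θ Real.pi) := by
  rw [jcone_pi_eq hθ]
  exact (measurableSet_lt measurable_const continuous_lastCoord.measurable).inter
    (measurableSet_lt (continuous_gth θ).measurable measurable_const)

/-- The hyperplane `gth θ = 0` is a null set. -/
lemma volume_gth_eq_zero {θ : ℝ} (hθ : θ ∈ Set.Ioo 0 Real.pi) :
    volume {x : V d | gth θ x = 0} = 0 := by
  set f : V d →ₗ[ℝ] ℝ :=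
    Real.sin θ • ((LinearMap.proj 0 : (Fin (d+2) → ℝ) →ₗ[ℝ] ℝ).comp
        (WithLp.linearEquiv 2 ℝ (Fin (d+2) → ℝ)).toLinearMap)
      - Real.cos θ • ((LinearMap.proj (Fin.last (d+1)) : (Fin (d+2) → ℝ) →ₗ[ℝ] ℝ).comp
        (WithLp.linearEquiv 2 ℝ (Fin (d+2) → ℝ)).toLinearMap) with hf
  have hfx : ∀ x : V d, f x = gth θ x := fun x => rfl
  have hker : {x : V d | gth θ x = 0} = (LinearMap.ker f : Set (V d)) := by
    ext x; simp [LinearMap.mem_ker, hfx]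
  rw [hker]
  apply MeasureTheory.Measure.addHaar_submodule
  intro hcon
  have hmem : e1 d ∈ LinearMap.ker f := by rw [hcon]; trivial
  have hval : gth θ (e1 d) = 0 := by rw [← hfx]; exact LinearMap.mem_ker.1 hmem
  have h10 : firstCoord (e1 d) = 1 := by
    simp [firstCoord, e1, EuclideanSpace.single_apply]
  have h1n : lastCoord (e1 d) = 0 := by
    have h0 : (Fin.last (d + 1) : Fin (d+2)) ≠ 0 := by
      simp [Fin.ext_iff, Fin.val_last]
    simp [lastCoord, e1, EuclideanSpace.single_apply, h0]
  rw [gth, h10, h1n] at hval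
  have hs : Real.sin θ > 0 := Real.sin_pos_of_pos_of_lt_pi hθ.1 hθ.2
  nlinarith

lemma dir_smul {c : ℝ} (hc : 0 < c) (z : V d) : dir (c • z) = dir z := by
  rw [dir, dir, norm_smul, smul_smul]
  congr 1
  rw [Real.norm_eq_abs, abs_of_pos hc, mul_inv, mul_comm c⁻¹ _, mul_assoc,
    inv_mul_cancel₀ hc.ne', mul_one]

lemma dir_mem_sphere {z : V d} (hz : z ≠ 0) : dir z ∈ sphere (0 : V d) 1 := by
  rw [mem_sphere_zero_iff_norm, dir, norm_smul, Real.norm_eq_abs,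
    abs_of_pos (inv_pos.2 (norm_pos_iff.2 hz)), inv_mul_cancel₀ (norm_ne_zero_iff.2 hz)]

lemma kstar_smul (a : V d → ℝ) (s : ℝ) {c : ℝ} (hc : 0 < c) (z : V d) :
    Kstar a s (c • z) = (c ^ ((d : ℝ) + 2 + s))⁻¹ * Kstar a s z := by
  rw [Kstar, Kstar, dir_smul hc, norm_smul, Real.norm_eq_abs, abs_of_pos hc,
    Real.mul_rpow hc.le (norm_nonneg z), div_eq_mul_inv, div_eq_mul_inv, mul_inv]
  ring

lemma isAngular_bound {a : V d → ℝ} (ha : IsAngular a) :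
    ∃ c₂ : ℝ, 0 < c₂ ∧ ∀ ω ∈ sphere (0 : V d) 1, |a ω| ≤ c₂ := by
  obtain ⟨-, ⟨c₁, c₂, hc₁, hb⟩, -⟩ := ha
  have hsph : (eAng d 0 : V d) ∈ sphere (0 : V d) 1 := by
    rw [mem_sphere_zero_iff_norm]
    have : eAng d 0 = e1 d := by simp [eAng]
    rw [this, e1, EuclideanSpace.norm_single, norm_one]
  refine ⟨c₂, hc₁.trans_le ((hb _ hsph).1.trans (hb _ hsph).2), fun ω hω => ?_⟩
  rw [abs_of_pos (hc₁.trans_le (hb ω hω).1)]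
  exact (hb ω hω).2

lemma continuousOn_kstar {a : V d → ℝ} (ha : IsAngular a) {s : ℝ} (hs : 0 ≤ (d : ℝ) + 2 + s) :
    ContinuousOn (Kstar a s) {(0 : V d)}ᶜ := by
  have hdir : ContinuousOn (dir : V d → V d) {(0 : V d)}ᶜ := by
    exact ContinuousOn.smul (f := fun z : V d => ‖z‖⁻¹) (g := id)
      ((continuous_norm.continuousOn).inv₀ fun z hz =>
      norm_ne_zero_iff.2 (by simpa using hz)) continuousOn_id
  have hnum : ContinuousOn (fun z : V d => a (dir z)) {(0 : V d)}ᶜ :=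
    ha.1.comp hdir fun z hz => dir_mem_sphere (by simpa using hz)
  have hden : ContinuousOn (fun z : V d => ‖z‖ ^ ((d : ℝ) + 2 + s)) {(0 : V d)}ᶜ :=
    (continuous_norm.rpow_const fun z => Or.inr hs).continuousOn
  exact hnum.div hden fun z hz =>
    (Real.rpow_pos_of_pos (norm_pos_iff.2 (by simpa using hz)) _).ne'

lemma continuousOn_kstar_sub {a : V d → ℝ} (ha : IsAngular a) {s : ℝ}
    (hs : 0 ≤ (d : ℝ) + 2 + s) (p : V d) :
    ContinuousOn (fun y => Kstar a s (p - y)) {p}ᶜ := by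
  apply (continuousOn_kstar ha hs).comp (continuous_const.sub continuous_id).continuousOn
  intro y hy
  simp only [mem_compl_iff, mem_singleton_iff] at hy ⊢
  rw [Pi.sub_apply, sub_eq_zero]
  exact fun h => hy h.symm

lemma inv_rpow_bound {ρ r z : ℝ} (hρ : 0 < ρ) (hr : 0 ≤ r) (hz : ρ ≤ z) :
    (z ^ r)⁻¹ ≤ (1 + 1 / ρ) ^ r * (1 + z) ^ (-r) := by
  have hzpos : 0 < z := hρ.trans_le hz
  have h1 : 1 + z ≤ (1 + 1 / ρ) * z := by
    have h0 : (1:ℝ) ≤ z / ρ := (one_le_div hρ).2 hz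
    have he : (1 + 1 / ρ) * z = z + z / ρ := by ring
    rw [he]; linarith
  have h2 : (1 + z) ^ r ≤ (1 + 1 / ρ) ^ r * z ^ r := by
    rw [← Real.mul_rpow (by positivity) hzpos.le]
    exact Real.rpow_le_rpow (by positivity) h1 hr
  have hA : (0:ℝ) < (1 + z) ^ r := Real.rpow_pos_of_pos (by linarith) _
  have hB : (0:ℝ) < z ^ r := Real.rpow_pos_of_pos hzpos _
  rw [Real.rpow_neg (by linarith : (0:ℝ) ≤ 1 + z), ← one_div (z ^ r),
    inv_eq_one_div ((1 + z) ^ r), mul_one_div, div_le_div_iff₀ hB hA]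
  nlinarith

lemma integrable_one_add_norm_sub (p : V d) {r : ℝ} (hr : ((d : ℝ) + 2) < r) :
    Integrable (fun y : V d => (1 + ‖p - y‖) ^ (-r)) volume := by
  have hnr : (Module.finrank ℝ (V d) : ℝ) < r := by
    rw [finrank_euclideanSpace_fin]; push_cast; exact hr
  have base : Integrable (fun x : V d => (1 + ‖x‖) ^ (-r)) volume :=
    integrable_one_add_norm hnr
  have hmp : MeasurePreserving (fun y : V d => p - y) volume volume :=
    MeasureTheory.Measure.measurePreserving_sub_left volume p
  exact hmp.integrable_comp_emb (MeasurableEquiv.subLeft p).measurableEmbedding |>.2 base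

lemma integrableOn_kstar_compl_ball {a : V d → ℝ} (ha : IsAngular a) {s : ℝ}
    (hs0 : 0 < s) (p : V d) {ρ : ℝ} (hρ : 0 < ρ) :
    IntegrableOn (fun y => Kstar a s (p - y)) (ball p ρ)ᶜ volume := by
  set r : ℝ := (d : ℝ) + 2 + s with hrdef
  have hr0 : 0 ≤ r := by positivity
  have hrn : ((d : ℝ) + 2) < r := by rw [hrdef]; linarith
  obtain ⟨c₂, hc₂, hbound⟩ := isAngular_bound ha
  have hint : Integrable (fun y : V d => c₂ * (1 + 1 / ρ) ^ r * (1 + ‖p - y‖) ^ (-r))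
      volume := (integrable_one_add_norm_sub p hrn).const_mul _
  apply Integrable.mono' hint.integrableOn
  · apply ContinuousOn.aestronglyMeasurable _ measurableSet_ball.compl
    apply (continuousOn_kstar_sub ha hr0 p).mono
    intro y hy
    simp only [mem_compl_iff, mem_ball, not_lt, mem_singleton_iff] at hy ⊢
    intro h; rw [h] at hy; simp at hy
    linarith
  · rw [ae_restrict_iff' measurableSet_ball.compl]
    filter_upwards with y hy
    simp only [mem_compl_iff, mem_ball, not_lt] at hy
    have hnorm : ρ ≤ ‖p - y‖ := by
      rw [← dist_eq_norm]
      rwa [dist_comm]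
    have hne : p - y ≠ 0 := by
      intro h; rw [h, norm_zero] at hnorm; linarith
    have h1 : |Kstar a s (p - y)| ≤ c₂ * (‖p - y‖ ^ r)⁻¹ := by
      rw [Kstar, abs_div, abs_of_nonneg (Real.rpow_nonneg (norm_nonneg _) _),
        div_eq_mul_inv]
      exact mul_le_mul_of_nonneg_right (hbound _ (dir_mem_sphere hne))
        (by positivity)
    calc ‖Kstar a s (p - y)‖ = |Kstar a s (p - y)| := rfl
      _ ≤ c₂ * (‖p - y‖ ^ r)⁻¹ := h1
      _ ≤ c₂ * ((1 + 1 / ρ) ^ r * (1 + ‖p - y‖) ^ (-r)) :=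
          mul_le_mul_of_nonneg_left (inv_rpow_bound hρ hr0 hnorm) hc₂.le
      _ = c₂ * (1 + 1 / ρ) ^ r * (1 + ‖p - y‖) ^ (-r) := by ring

lemma setIntegral_affine_scale {ρ₀ : ℝ} (hρ₀ : 0 < ρ₀) (w : V d) (f : V d → ℝ)
    (B : Set (V d)) :
    ∫ y in B, f y = ρ₀ ^ (d + 2) * ∫ x in (fun x : V d => ρ₀ • x + w) ⁻¹' B,
      f (ρ₀ • x + w) := by
  set T : V d → V d := fun x => ρ₀ • x + w with hT
  have hhom : V d ≃ₜ V d :=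
    (Homeomorph.smulOfNeZero (ρ₀ : ℝ) hρ₀.ne').trans (Homeomorph.addRight w)
  have hemb : MeasurableEmbedding T := by
    have : T = ⇑((Homeomorph.smulOfNeZero (ρ₀ : ℝ) hρ₀.ne').trans
        (Homeomorph.addRight w)) := rfl
    rw [this]
    exact (Homeomorph.measurableEmbedding _)
  have hmap : Measure.map T volume
      = ENNReal.ofReal ((ρ₀ ^ (d + 2))⁻¹) • (volume : Measure (V d)) := by
    have h1 : T = (fun y : V d => y + w) ∘ (fun x : V d => ρ₀ • x) := rfl
    rw [h1, ← Measure.map_map (measurable_add_const w) (measurable_const_smul ρ₀),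
      Measure.map_addHaar_smul volume hρ₀.ne', Measure.map_smul,
      map_add_right_eq_self volume w, finrank_euclideanSpace_fin]
    congr 1
    rw [abs_of_nonneg (by positivity)]
  have key : ∫ x in T ⁻¹' B, f (T x) = (ρ₀ ^ (d + 2))⁻¹ * ∫ y in B, f y := by
    rw [← hemb.setIntegral_map, hmap, Measure.restrict_smul, integral_smul_measure,
      ENNReal.toReal_ofReal (by positivity), smul_eq_mul]
  rw [key]
  field_simp

lemma abs_lastCoord_le_norm (z : V d) : |lastCoord z| ≤ ‖z‖ := by
  rw [EuclideanSpace.norm_eq, ← Real.sqrt_sq_eq_abs]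
  apply Real.sqrt_le_sqrt
  have h := Finset.single_le_sum (f := fun i => ‖z i‖ ^ 2)
    (fun i _ => by positivity) (Finset.mem_univ (Fin.last (d + 1)))
  simpa [lastCoord, sq_abs] using h

end Capillarity

namespace Capillarity

/-- **Reformulation of the contact angle condition** (Proposition 1.9). -/
theorem contact_angle_relation (d : ℕ) (s₁ s₂ σ : ℝ)
    (hs₁ : s₁ ∈ Ioo (0:ℝ) 1) (hs₂ : s₂ ∈ Ioo (0:ℝ) 1)
    (a₁ a₂ : V d → ℝ) (ha₁ : IsAngular a₁) (ha₂ : IsAngular a₂)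
    (hcase : s₁ = s₂ ∨ σ = 0)
    (H Vh : Set (V d)) (hH : IsOpenHalfSpace H) (hVh : IsOpenHalfSpace Vh)
    (hHup : H = {x : V d | 0 < lastCoord x})
    (θ : ℝ) (hθ : θ ∈ Ioo 0 Real.pi) (hJ : H ∩ Vh = Jcone d 0 θ)
    (hex : ∃ v ∈ H ∩ frontier Vh, ∃ L : ℝ, HasPV (Kstar a₁ s₁) (H ∩ Vh) v L ∧
      L - (∫ z in Hᶜ, Kstar a₁ s₁ (v - z)) + σ * (∫ z in Hᶜ, Kstar a₂ s₂ (v - z)) = 0) :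
    ContactAngleEq d a₁ a₂ s₁ σ θ := by
  obtain ⟨hθ1, hθ2⟩ := hθ
  obtain ⟨v, hvmem, L, hPV, hrel⟩ := hex
  have hHopen : IsOpen H := by
    rw [hHup]; exact isOpen_lt continuous_const continuous_lastCoord
  have hVopen : IsOpen Vh := by
    obtain ⟨ν, c, hν0, rfl⟩ := hVh
    exact isOpen_lt continuous_const (continuous_id.inner continuous_const)
  obtain ⟨hvH, hvF⟩ := hvmem
  have hvn : 0 < lastCoord v := by rw [hHup] at hvH; exact hvH
  rw [hVopen.frontier_eq] at hvF
  have hvnotJ : v ∉ Jcone d 0 θ := by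
    intro h
    rw [← hJ] at h
    exact hvF.2 h.2
  have hvclos : v ∈ closure (Jcone d 0 θ) := by
    rw [← hJ]
    exact hHopen.inter_closure ⟨hvH, hvF.1⟩
  have hgle : 0 ≤ gth θ v := by
    have hsub : closure (Jcone d 0 θ) ⊆ {x : V d | 0 ≤ gth θ x} := by
      apply closure_minimal _ (isClosed_le continuous_const (continuous_gth θ))
      intro x hx
      rw [jcone_zero_eq ⟨hθ1, hθ2⟩] at hx
      exact hx.2.le
    exact hsub hvclos
  have hgv : gth θ v = 0 := by
    rcases eq_or_lt_of_le hgle with h | h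
    · exact h.symm
    · exact absurd (by rw [jcone_zero_eq ⟨hθ1, hθ2⟩]; exact ⟨hvn, h⟩) hvnotJ
  have hsθ : 0 < Real.sin θ := Real.sin_pos_of_pos_of_lt_pi hθ1 hθ2
  set ρ₀ : ℝ := lastCoord v / Real.sin θ with hρ₀def
  have hρ₀ : 0 < ρ₀ := div_pos hvn hsθ
  have hvlast : lastCoord v = ρ₀ * Real.sin θ := by
    rw [hρ₀def]; field_simp
  have hvfirst : firstCoord v = ρ₀ * Real.cos θ := by
    have h1 : Real.sin θ * firstCoord v - Real.cos θ * lastCoord v = 0 := hgv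
    rw [hvlast] at h1
    apply mul_left_cancel₀ hsθ.ne'
    linear_combination h1
  set e : V d := eAng d θ with hedef
  set w : V d := v - ρ₀ • e with hwdef
  have hw1 : firstCoord w = 0 := by
    rw [hwdef, firstCoord_sub, firstCoord_smul, hedef, firstCoord_eAng, hvfirst]; ring
  have hwn : lastCoord w = 0 := by
    rw [hwdef, lastCoord_sub, lastCoord_smul, hedef, lastCoord_eAng, hvlast]; ring
  set T : V d → V d := fun x => ρ₀ • x + w with hTdef
  have hvT : ∀ x, v - T x = ρ₀ • (e - x) := by
    intro x
    simp only [hTdef, hwdef, smul_sub]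
    abel
  have hTlast : ∀ x, lastCoord (T x) = ρ₀ * lastCoord x := by
    intro x
    simp only [hTdef]
    rw [lastCoord_add, lastCoord_smul, hwn]; ring
  have hTg : ∀ x, gth θ (T x) = ρ₀ * gth θ x := by
    intro x
    simp only [hTdef, gth, firstCoord_add, firstCoord_smul, lastCoord_add, lastCoord_smul,
      hw1, hwn]
    ring
  have hmul1 : ∀ t : ℝ, 0 < ρ₀ * t ↔ 0 < t := by
    intro t
    constructor
    · intro h; nlinarith
    · exact fun h => mul_pos hρ₀ h
  have hmul2 : ∀ t : ℝ, ρ₀ * t < 0 ↔ t < 0 := by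
    intro t
    constructor
    · intro h; nlinarith
    · intro h; exact mul_neg_of_pos_of_neg hρ₀ h
  have hmul3 : ∀ t : ℝ, ρ₀ * t ≤ 0 ↔ t ≤ 0 := by
    intro t
    rw [← not_lt, ← not_lt, hmul1 t]
  have hpre0 : T ⁻¹' (Jcone d 0 θ) = Jcone d 0 θ := by
    ext x
    simp only [mem_preimage, jcone_zero_eq ⟨hθ1, hθ2⟩, mem_setOf_eq, hTlast x, hTg x,
      hmul1]
  have hpreπ : T ⁻¹' (Jcone d θ Real.pi) = Jcone d θ Real.pi := by
    ext x
    simp only [mem_preimage, jcone_pi_eq ⟨hθ1, hθ2⟩, mem_setOf_eq, hTlast x, hTg x,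
      hmul1, hmul2]
  set Hc : Set (V d) := {x : V d | lastCoord x ≤ 0} with hHcdef
  have hHcompl : Hᶜ = Hc := by
    rw [hHup, hHcdef]; ext x; simp [not_lt]
  have hpreH : T ⁻¹' Hc = Hc := by
    ext x
    simp only [hHcdef, mem_preimage, mem_setOf_eq, hTlast x, hmul3]
  have hpreB : ∀ ρ : ℝ, T ⁻¹' (ball v (ρ₀ * ρ)) = ball e ρ := by
    intro ρ; ext x
    have hdist : dist (T x) v = ρ₀ * dist x e := by
      rw [dist_eq_norm, norm_sub_rev (T x) v, hvT x, norm_smul, Real.norm_eq_abs,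
        abs_of_pos hρ₀, dist_eq_norm, norm_sub_rev x e]
    simp only [mem_preimage, mem_ball, hdist]
    exact mul_lt_mul_iff_right₀ hρ₀
  -- kernel scaling and change of variables
  have hKT : ∀ (a : V d → ℝ) (x : V d),
      Kstar a s₁ (v - T x) = (ρ₀ ^ ((d:ℝ) + 2 + s₁))⁻¹ * Kstar a s₁ (e - x) := by
    intro a x
    rw [hvT x, kstar_smul a s₁ hρ₀]
  set κ : ℝ := ρ₀ ^ (d + 2) * (ρ₀ ^ ((d:ℝ) + 2 + s₁))⁻¹ with hκdef
  have hκpos : 0 < κ := by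
    rw [hκdef]
    have h1 : (0:ℝ) < ρ₀ ^ (d + 2) := by positivity
    have h2 : (0:ℝ) < ρ₀ ^ ((d:ℝ) + 2 + s₁) := Real.rpow_pos_of_pos hρ₀ _
    positivity
  have hcov : ∀ (a : V d → ℝ) (B : Set (V d)),
      ∫ y in B, Kstar a s₁ (v - y) = κ * ∫ x in T ⁻¹' B, Kstar a s₁ (e - x) := by
    intro a B
    calc ∫ y in B, Kstar a s₁ (v - y)
        = ρ₀ ^ (d + 2) * ∫ x in T ⁻¹' B, Kstar a s₁ (v - (ρ₀ • x + w)) :=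
          setIntegral_affine_scale hρ₀ w _ B
      _ = ρ₀ ^ (d + 2) * ∫ x in T ⁻¹' B,
            (ρ₀ ^ ((d:ℝ) + 2 + s₁))⁻¹ * Kstar a s₁ (e - x) := by
          congr 1
          exact integral_congr_ae (ae_of_all _ fun x => hKT a x)
      _ = κ * ∫ x in T ⁻¹' B, Kstar a s₁ (e - x) := by
          rw [MeasureTheory.integral_const_mul]; rw [hκdef]; ring
  -- rewrite the PV hypothesis
  unfold HasPV at hPV
  rw [hJ] at hPV
  rw [hHcompl] at hrel
  set C₀ : ℝ := ∫ z in Hc, Kstar a₁ s₁ (v - z) with hC₀def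
  -- measurability
  have hFmeas : MeasurableSet (Jcone d 0 θ) := measurableSet_jcone_zero ⟨hθ1, hθ2⟩
  have hJπmeas : MeasurableSet (Jcone d θ Real.pi) := measurableSet_jcone_pi ⟨hθ1, hθ2⟩
  have hHcmeas : MeasurableSet Hc :=
    measurableSet_le continuous_lastCoord.measurable measurable_const
  have hsetρ : ∀ ρ : ℝ, {y : V d | ρ ≤ dist v y} = (ball v ρ)ᶜ := by
    intro ρ; ext y
    simp [mem_ball, dist_comm, not_lt]
  -- the key identity for small ρ
  have hkey : ∀ ρ ∈ Ioo (0:ℝ) (lastCoord v),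
      (∫ y in {y : V d | ρ ≤ dist v y},
        (Set.indicator (Jcone d 0 θ)ᶜ (fun _ => (1:ℝ)) y
          - Set.indicator (Jcone d 0 θ) (fun _ => (1:ℝ)) y) * Kstar a₁ s₁ (v - y))
      = ((∫ y in Jcone d θ Real.pi \ ball v ρ, Kstar a₁ s₁ (v - y))
          - ∫ y in Jcone d 0 θ \ ball v ρ, Kstar a₁ s₁ (v - y)) + C₀ := by
    rintro ρ ⟨hρ1, hρ2⟩
    have hball : MeasurableSet (ball v ρ : Set (V d))ᶜ := measurableSet_ball.compl
    have hint : IntegrableOn (fun y => Kstar a₁ s₁ (v - y)) (ball v ρ)ᶜ volume :=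
      integrableOn_kstar_compl_ball ha₁ hs₁.1 v hρ1
    have hid : ∀ y : V d,
        (Set.indicator (Jcone d 0 θ)ᶜ (fun _ => (1:ℝ)) y
          - Set.indicator (Jcone d 0 θ) (fun _ => (1:ℝ)) y) * Kstar a₁ s₁ (v - y)
        = Set.indicator (Jcone d 0 θ)ᶜ (fun y => Kstar a₁ s₁ (v - y)) y
          - Set.indicator (Jcone d 0 θ) (fun y => Kstar a₁ s₁ (v - y)) y := by
      intro y
      by_cases hy : y ∈ Jcone d 0 θ <;>
        simp [Set.indicator_apply, hy]
    have hsub1 : Jcone d θ Real.pi ∪ Hc ⊆ (Jcone d 0 θ)ᶜ := by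
      intro x hx
      simp only [mem_compl_iff, jcone_zero_eq ⟨hθ1, hθ2⟩, mem_setOf_eq, not_and, not_lt]
      intro hxn
      rcases hx with hx | hx
      · rw [jcone_pi_eq ⟨hθ1, hθ2⟩] at hx
        exact hx.2.le
      · exact absurd hxn (by simpa [hHcdef, not_lt] using hx)
    have hnull : volume ((((ball v ρ)ᶜ ∩ (Jcone d 0 θ)ᶜ))
        \ ((ball v ρ)ᶜ ∩ (Jcone d θ Real.pi ∪ Hc))) = 0 := by
      apply measure_mono_null _ (volume_gth_eq_zero (d := d) ⟨hθ1, hθ2⟩)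
      rintro x ⟨⟨hxb, hxF⟩, hxn⟩
      simp only [mem_setOf_eq]
      have hxF' : ¬ (0 < lastCoord x ∧ 0 < gth θ x) := by
        rw [jcone_zero_eq ⟨hθ1, hθ2⟩] at hxF; exact hxF
      have hxn' : x ∉ Jcone d θ Real.pi ∪ Hc := fun h => hxn ⟨hxb, h⟩
      have h1 : ¬ (0 < lastCoord x ∧ gth θ x < 0) := by
        intro h
        exact hxn' (Or.inl (by rw [jcone_pi_eq ⟨hθ1, hθ2⟩]; exact h))
      have h2 : 0 < lastCoord x := by
        by_contra h
        exact hxn' (Or.inr (by simpa [hHcdef] using not_lt.1 h))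
      push_neg at hxF' h1
      exact le_antisymm (hxF' h2) (h1 h2)
    have haeeq : (((ball v ρ)ᶜ ∩ (Jcone d 0 θ)ᶜ : Set (V d)))
        =ᵐ[volume] (((ball v ρ)ᶜ ∩ (Jcone d θ Real.pi ∪ Hc) : Set (V d))) := by
      rw [MeasureTheory.ae_eq_set]
      constructor
      · exact hnull
      · have hsubset : ((ball v ρ)ᶜ ∩ (Jcone d θ Real.pi ∪ Hc))
            ⊆ ((ball v ρ)ᶜ ∩ (Jcone d 0 θ)ᶜ) :=
          Set.inter_subset_inter_right _ hsub1
        rw [Set.diff_eq_empty.2 hsubset]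
        exact measure_empty
    have hdisj : Disjoint ((ball v ρ)ᶜ ∩ Jcone d θ Real.pi) ((ball v ρ)ᶜ ∩ Hc) := by
      rw [Set.disjoint_left]
      rintro x ⟨-, hx1⟩ ⟨-, hx2⟩
      rw [jcone_pi_eq ⟨hθ1, hθ2⟩] at hx1
      have hx2' : lastCoord x ≤ 0 := hx2
      linarith [hx1.1]
    have hsubHc : Hc ⊆ (ball v ρ)ᶜ := by
      intro y hy
      have hy' : lastCoord y ≤ 0 := hy
      simp only [mem_compl_iff, mem_ball, not_lt]
      rw [dist_eq_norm]
      have h1 : |lastCoord (y - v)| ≤ ‖y - v‖ := abs_lastCoord_le_norm _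
      rw [lastCoord_sub] at h1
      have h2 : lastCoord v - lastCoord y ≤ |lastCoord y - lastCoord v| := by
        rw [abs_sub_comm]; exact le_abs_self _
      linarith
    have hs1 : (ball v ρ)ᶜ ∩ Jcone d θ Real.pi = Jcone d θ Real.pi \ ball v ρ := by
      rw [Set.diff_eq, Set.inter_comm]
    have hs3 : (ball v ρ)ᶜ ∩ Jcone d 0 θ = Jcone d 0 θ \ ball v ρ := by
      rw [Set.diff_eq, Set.inter_comm]
    have hs2 : (ball v ρ)ᶜ ∩ Hc = Hc := Set.inter_eq_right.2 hsubHc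
    rw [hsetρ ρ, integral_congr_ae (ae_of_all _ hid),
      integral_sub (hint.indicator hFmeas.compl) (hint.indicator hFmeas),
      setIntegral_indicator hFmeas.compl, setIntegral_indicator hFmeas,
      setIntegral_congr_set haeeq, Set.inter_union_distrib_left,
      setIntegral_union hdisj (hball.inter hHcmeas)
        (hint.mono_set Set.inter_subset_left) (hint.mono_set Set.inter_subset_left),
      hs1, hs2, hs3, ← hC₀def]
    ring
  -- convergence of the v-centered difference
  have hG : Tendsto (fun t : ℝ =>
      (∫ y in Jcone d θ Real.pi \ ball v t, Kstar a₁ s₁ (v - y))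
        - ∫ y in Jcone d 0 θ \ ball v t, Kstar a₁ s₁ (v - y)) (𝓝[>] 0)
      (𝓝 (L - C₀)) := by
    apply (hPV.sub_const C₀).congr'
    filter_upwards [Ioo_mem_nhdsGT_of_mem (Set.left_mem_Ico.2 hvn)] with ρ hρ
    rw [hkey ρ hρ]
    ring
  have hscale : Tendsto (fun ρ : ℝ => ρ₀ * ρ) (𝓝[>] 0) (𝓝[>] 0) := by
    apply tendsto_nhdsWithin_of_tendsto_nhds_of_eventually_within
    · have h0 : Tendsto (fun ρ : ℝ => ρ₀ * ρ) (𝓝 0) (𝓝 (ρ₀ * 0)) :=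
        (continuous_const.mul continuous_id).tendsto 0
      rw [mul_zero] at h0
      exact h0.mono_left nhdsWithin_le_nhds
    · filter_upwards [self_mem_nhdsWithin] with x hx
      exact mul_pos hρ₀ hx
  have hGcomp : Tendsto (fun ρ : ℝ =>
      (∫ y in Jcone d θ Real.pi \ ball v (ρ₀ * ρ), Kstar a₁ s₁ (v - y))
        - ∫ y in Jcone d 0 θ \ ball v (ρ₀ * ρ), Kstar a₁ s₁ (v - y)) (𝓝[>] 0)
      (𝓝 (L - C₀)) := hG.comp hscale
  -- change of variables identity for each ρ
  have hΦeq : ∀ ρ : ℝ,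
      ((∫ x in Jcone d θ Real.pi \ ball e ρ, Kstar a₁ s₁ (e - x))
        - ∫ x in Jcone d 0 θ \ ball e ρ, Kstar a₁ s₁ (e - x))
      = κ⁻¹ * ((∫ y in Jcone d θ Real.pi \ ball v (ρ₀ * ρ), Kstar a₁ s₁ (v - y))
        - ∫ y in Jcone d 0 θ \ ball v (ρ₀ * ρ), Kstar a₁ s₁ (v - y)) := by
    intro ρ
    have hπ : ∫ y in Jcone d θ Real.pi \ ball v (ρ₀ * ρ), Kstar a₁ s₁ (v - y)
        = κ * ∫ x in Jcone d θ Real.pi \ ball e ρ, Kstar a₁ s₁ (e - x) := by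
      rw [hcov a₁ _, Set.preimage_diff, hpreπ, hpreB ρ]
    have h0 : ∫ y in Jcone d 0 θ \ ball v (ρ₀ * ρ), Kstar a₁ s₁ (v - y)
        = κ * ∫ x in Jcone d 0 θ \ ball e ρ, Kstar a₁ s₁ (e - x) := by
      rw [hcov a₁ _, Set.preimage_diff, hpre0, hpreB ρ]
    rw [hπ, h0]
    rw [mul_sub, ← mul_assoc, inv_mul_cancel₀ hκpos.ne', one_mul, ← mul_assoc,
      inv_mul_cancel₀ hκpos.ne', one_mul]
  have hlim : Tendsto (fun ρ : ℝ =>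
      ((∫ x in Jcone d θ Real.pi \ ball e ρ, Kstar a₁ s₁ (e - x))
        - ∫ x in Jcone d 0 θ \ ball e ρ, Kstar a₁ s₁ (e - x))) (𝓝[>] 0)
      (𝓝 (κ⁻¹ * (L - C₀))) := by
    rw [funext hΦeq]
    exact hGcomp.const_mul κ⁻¹
  -- identify the limit value
  have hval : κ⁻¹ * (L - C₀) = -(σ * ∫ x in Hc, Kstar a₂ s₁ (e - x)) := by
    have hLC : L - C₀ = -(σ * ∫ z in Hc, Kstar a₂ s₂ (v - z)) := by
      linarith [hrel]
    rcases hcase with hss | hσ0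
    · subst hss
      have hC2 : ∫ z in Hc, Kstar a₂ s₁ (v - z)
          = κ * ∫ x in Hc, Kstar a₂ s₁ (e - x) := by
        rw [hcov a₂ Hc, hpreH]
      rw [hLC, hC2]
      field_simp
    · rw [hσ0] at hLC ⊢
      rw [hLC]
      ring
  rw [hval] at hlim
  exact hlim

end Capillarity
end
end

section
/- Let n ≥ 2, r, t > 0, s ∈ (0,1), D := {x = (x′,x_n) ∈ ℝⁿ : |x′| < r and x_n ∈ (0,t)} and F := {x = (x′,x_n) ∈ ℝⁿ : |x′| > r and x_n ∈ (0,t)}. Then ∬_{D × F} |x−y|^{−(n+s)} dx dy ≤ C t r^{n−1−s} for some constant C > 0 depending only on n and s. -/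
open Set MeasureTheory Metric Filter Bornology
open scoped ENNReal NNReal Topology symmDiff RealInnerProductSpace

noncomputable section

namespace Capillarity

variable {d : ℕ}

lemma tail_bound (m : ℕ) (s : ℝ) (hs : 0 < s) {p : ℝ} (hp : p = (m + 1 : ℝ) + s) :
    ∃ C : ℝ≥0∞, C ≠ ∞ ∧ ∀ δ : ℝ, 0 < δ →
      ∫⁻ z in (ball (0 : EuclideanSpace ℝ (Fin (m + 1))) δ)ᶜ,
        ENNReal.ofReal (‖z‖ ^ (-p)) ≤ C * ENNReal.ofReal (δ ^ (-s)) := by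
  set E := EuclideanSpace ℝ (Fin (m + 1))
  set B : ℝ≥0∞ := volume (ball (0 : E) 1) with hB
  have hxlt : ENNReal.ofReal ((2:ℝ) ^ (-s)) < 1 := by
    rw [← ENNReal.ofReal_one]
    exact ENNReal.ofReal_lt_ofReal_iff_of_nonneg (by positivity) |>.2
      (Real.rpow_lt_one_of_one_lt_of_neg one_lt_two (neg_lt_zero.2 hs))
  refine ⟨ENNReal.ofReal ((2:ℝ) ^ (m + 1 : ℕ)) * B *
      (1 - ENNReal.ofReal ((2:ℝ) ^ (-s)))⁻¹, ?_, ?_⟩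
  · refine ENNReal.mul_ne_top (ENNReal.mul_ne_top ENNReal.ofReal_ne_top
      measure_ball_lt_top.ne) ?_
    exact ENNReal.inv_ne_top.2 (tsub_pos_of_lt hxlt).ne'
  intro δ hδ
  set A : ℕ → Set E := fun k => ball (0:E) (δ * 2 ^ (k+1)) \ ball (0:E) (δ * 2 ^ k) with hA
  have hcover : (ball (0:E) δ)ᶜ ⊆ ⋃ k : ℕ, A k := by
    intro z hz
    rw [mem_compl_iff, mem_ball_zero_iff, not_lt] at hz
    have hq1 : 1 ≤ ‖z‖ / δ := (one_le_div hδ).2 hz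
    set q := ‖z‖ / δ with hq
    have hn1 : 1 ≤ ⌊q⌋₊ := Nat.le_floor (by exact_mod_cast hq1)
    set k := Nat.log 2 ⌊q⌋₊ with hk
    have hlow : ((2:ℝ) ^ k) ≤ q := by
      calc ((2:ℝ) ^ k) = ((2 ^ k : ℕ) : ℝ) := by push_cast; ring
        _ ≤ (⌊q⌋₊ : ℝ) := by exact_mod_cast Nat.pow_log_le_self 2 (by omega)
        _ ≤ q := Nat.floor_le (by linarith)
    have hup : q < (2:ℝ) ^ (k + 1) := by
      have h1 : q < (⌊q⌋₊ : ℝ) + 1 := Nat.lt_floor_add_one q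
      have h2 : ⌊q⌋₊ + 1 ≤ 2 ^ (k + 1) := Nat.lt_pow_succ_log_self one_lt_two _
      calc q < (⌊q⌋₊ : ℝ) + 1 := h1
        _ ≤ ((2 ^ (k+1) : ℕ) : ℝ) := by exact_mod_cast h2
        _ = (2:ℝ) ^ (k+1) := by push_cast; ring
    refine mem_iUnion.2 ⟨k, ?_, ?_⟩
    · rw [mem_ball_zero_iff]
      calc ‖z‖ = δ * q := by rw [hq]; field_simp
        _ < δ * 2 ^ (k+1) := by exact mul_lt_mul_of_pos_left hup hδ
    · rw [mem_ball_zero_iff, not_lt]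
      calc δ * 2 ^ k ≤ δ * q := by exact mul_le_mul_of_nonneg_left hlow hδ.le
        _ = ‖z‖ := by rw [hq]; field_simp
  have hps : -p ≤ 0 := by rw [hp]; push_cast; nlinarith [hs, (Nat.cast_nonneg m : (0:ℝ) ≤ m)]
  have key : ∀ k : ℕ, (δ * 2 ^ k) ^ (-p) * (δ * 2 ^ (k+1)) ^ ((m+1 : ℕ)) =
      δ ^ (-s) * 2 ^ (m + 1 : ℕ) * ((2:ℝ) ^ (-s)) ^ k := by
    intro k
    have h2 : (0:ℝ) ≤ 2 := by norm_num
    have collect : ∀ a b c d : ℝ, δ^a * (2:ℝ)^b * (δ^c * (2:ℝ)^d) = δ^(a+c) * 2^(b+d) := by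
      intro a b c d
      rw [Real.rpow_add hδ, Real.rpow_add (by norm_num : (0:ℝ) < 2)]; ring
    rw [← Real.rpow_natCast (δ * 2 ^ (k+1)) (m+1), ← Real.rpow_natCast (2:ℝ) (m+1),
      ← Real.rpow_natCast ((2:ℝ) ^ (-s)) k, ← Real.rpow_natCast (2:ℝ) k,
      ← Real.rpow_natCast (2:ℝ) (k+1),
      Real.mul_rpow hδ.le (by positivity), Real.mul_rpow hδ.le (by positivity),
      ← Real.rpow_mul h2, ← Real.rpow_mul h2, ← Real.rpow_mul h2, collect,
      mul_assoc (δ ^ (-s)), ← Real.rpow_add (by norm_num : (0:ℝ) < 2)]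
    rw [hp]
    congr 1 <;> push_cast <;> ring
  calc ∫⁻ z in (ball (0:E) δ)ᶜ, ENNReal.ofReal (‖z‖ ^ (-p))
      ≤ ∫⁻ z in ⋃ k, A k, ENNReal.ofReal (‖z‖ ^ (-p)) := lintegral_mono_set hcover
    _ ≤ ∑' k, ∫⁻ z in A k, ENNReal.ofReal (‖z‖ ^ (-p)) := lintegral_iUnion_le _ _
    _ ≤ ∑' k, ENNReal.ofReal ((δ * 2 ^ k) ^ (-p)) * volume (A k) := by
        refine ENNReal.tsum_le_tsum fun k => ?_
        have hmono : ∀ z ∈ A k, ENNReal.ofReal (‖z‖ ^ (-p)) ≤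
            ENNReal.ofReal ((δ * 2 ^ k) ^ (-p)) := by
          intro z hz
          have hz2 : δ * 2 ^ k ≤ ‖z‖ := by
            have := hz.2; rw [mem_ball_zero_iff, not_lt] at this; exact this
          exact ENNReal.ofReal_le_ofReal
            (Real.rpow_le_rpow_of_nonpos (by positivity) hz2 hps)
        calc ∫⁻ z in A k, ENNReal.ofReal (‖z‖ ^ (-p))
            ≤ ∫⁻ _z in A k, ENNReal.ofReal ((δ * 2 ^ k) ^ (-p)) :=
              setLIntegral_mono' (measurableSet_ball.diff measurableSet_ball) hmono
          _ = ENNReal.ofReal ((δ * 2 ^ k) ^ (-p)) * volume (A k) := setLIntegral_const _ _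
    _ ≤ ∑' k, ENNReal.ofReal ((δ * 2 ^ k) ^ (-p)) *
          (ENNReal.ofReal ((δ * 2 ^ (k+1)) ^ (m+1 : ℕ)) * B) := by
        refine ENNReal.tsum_le_tsum fun k => ?_
        refine mul_le_mul_right ?_ _
        calc volume (A k) ≤ volume (ball (0:E) (δ * 2 ^ (k+1))) :=
              measure_mono diff_subset
          _ = ENNReal.ofReal ((δ * 2 ^ (k+1)) ^ (m+1 : ℕ)) * B := by
              rw [Measure.addHaar_ball _ _ (by positivity), finrank_euclideanSpace_fin]
    _ = ∑' k, (ENNReal.ofReal ((2:ℝ) ^ (m+1 : ℕ)) * B *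
          ENNReal.ofReal ((2:ℝ) ^ (-s)) ^ k) * ENNReal.ofReal (δ ^ (-s)) := by
        congr 1; funext k
        rw [← mul_assoc, ← ENNReal.ofReal_mul (by positivity), key k,
          ENNReal.ofReal_mul (by positivity), ENNReal.ofReal_mul (by positivity),
          ← ENNReal.ofReal_pow (by positivity)]
        ring
    _ = (ENNReal.ofReal ((2:ℝ) ^ (m+1 : ℕ)) * B *
          (1 - ENNReal.ofReal ((2:ℝ) ^ (-s)))⁻¹) * ENNReal.ofReal (δ ^ (-s)) := by
        rw [ENNReal.tsum_mul_right, ENNReal.tsum_mul_left, ENNReal.tsum_geometric]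


lemma pow_sub_pow_le_aux (m : ℕ) : ∀ {a b : ℝ}, 0 ≤ a → a ≤ b → b ≤ 1 →
    b ^ m - a ^ m ≤ m * (b - a) := by
  induction m with
  | zero => intro a b _ _ _; simp
  | succ k ih =>
    intro a b ha hab hb1
    have hb : 0 ≤ b := ha.trans hab
    have h2 : b ^ k - a ^ k ≤ k * (b - a) := ih ha hab hb1
    have hnn : 0 ≤ b ^ k - a ^ k := sub_nonneg.2 (pow_le_pow_left₀ ha hab k)
    have h4 : a ^ k ≤ 1 := pow_le_one₀ ha (hab.trans hb1)
    have h1 : b ^ (k+1) - a ^ (k+1) = b * (b ^ k - a ^ k) + (b - a) * a ^ k := by ring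
    rw [h1]
    push_cast
    nlinarith [sub_nonneg.2 hab]

lemma ball_bound (m : ℕ) (s : ℝ) (hs0 : 0 < s) (hs1 : s < 1) :
    ∃ C : ℝ≥0∞, C ≠ ∞ ∧ ∀ r : ℝ, 0 < r →
      ∫⁻ a in ball (0 : EuclideanSpace ℝ (Fin (m + 1))) r,
        ENNReal.ofReal ((r - ‖a‖) ^ (-s)) ≤ C * ENNReal.ofReal (r ^ ((m + 1 : ℝ) - s)) := by
  set B : ℝ≥0∞ := volume (ball (0 : EuclideanSpace ℝ (Fin (m + 1))) 1) with hB
  set x : ℝ≥0∞ := ENNReal.ofReal ((2⁻¹:ℝ) ^ (1 - s)) with hx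
  have hxlt : x < 1 := by
    rw [hx, ← ENNReal.ofReal_one]
    refine ENNReal.ofReal_lt_ofReal_iff_of_nonneg (by positivity) |>.2 ?_
    exact Real.rpow_lt_one (by norm_num) (by norm_num) (by linarith)
  refine ⟨ENNReal.ofReal ((m:ℝ)+1) * (x * (1 - x)⁻¹) * B, ?_, ?_⟩
  · refine ENNReal.mul_ne_top (ENNReal.mul_ne_top ENNReal.ofReal_ne_top ?_)
      measure_ball_lt_top.ne
    exact ENNReal.mul_ne_top ENNReal.ofReal_ne_top
      (ENNReal.inv_ne_top.2 (tsub_pos_of_lt hxlt).ne')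
  intro r hr
  have hcnn : ∀ k : ℕ, (0:ℝ) ≤ 1 - (2⁻¹:ℝ) ^ k := fun k => by
    have : (2⁻¹:ℝ) ^ k ≤ 1 := pow_le_one₀ (by norm_num) (by norm_num)
    linarith
  have hc1 : ∀ k : ℕ, (1 - (2⁻¹:ℝ) ^ k) ≤ 1 := fun k => by
    have : (0:ℝ) ≤ (2⁻¹:ℝ) ^ k := by positivity
    linarith
  have hcmono : ∀ k : ℕ, (1 - (2⁻¹:ℝ) ^ k) ≤ (1 - (2⁻¹:ℝ) ^ (k+1)) := fun k => by
    have : (2⁻¹:ℝ) ^ (k+1) ≤ (2⁻¹:ℝ) ^ k :=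
      pow_le_pow_of_le_one (by norm_num) (by norm_num) (by omega)
    linarith
  set S : ℕ → Set (EuclideanSpace ℝ (Fin (m + 1))) := fun k =>
    ball (0 : EuclideanSpace ℝ (Fin (m + 1))) (r * (1 - (2⁻¹:ℝ) ^ (k+1))) \
    ball (0 : EuclideanSpace ℝ (Fin (m + 1))) (r * (1 - (2⁻¹:ℝ) ^ k)) with hS
  have hcover : ball (0 : EuclideanSpace ℝ (Fin (m + 1))) r ⊆ ⋃ k : ℕ, S k := by
    intro a ha
    rw [mem_ball_zero_iff] at ha
    have hra : 0 < r - ‖a‖ := by linarith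
    have hrar : r - ‖a‖ ≤ r := by have := norm_nonneg a; linarith
    have hq1 : 1 ≤ r / (r - ‖a‖) := (one_le_div hra).2 hrar
    have hn1 : 1 ≤ ⌊r / (r - ‖a‖)⌋₊ := Nat.le_floor (by exact_mod_cast hq1)
    set k := Nat.log 2 ⌊r / (r - ‖a‖)⌋₊ with hk
    have hlow : ((2:ℝ) ^ k) ≤ r / (r - ‖a‖) := by
      calc ((2:ℝ) ^ k) = ((2 ^ k : ℕ) : ℝ) := by push_cast; ring
        _ ≤ (⌊r / (r - ‖a‖)⌋₊ : ℝ) := by exact_mod_cast Nat.pow_log_le_self 2 (by omega)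
        _ ≤ r / (r - ‖a‖) := Nat.floor_le (by linarith)
    have hup : r / (r - ‖a‖) < (2:ℝ) ^ (k + 1) := by
      have h1 : r / (r - ‖a‖) < (⌊r / (r - ‖a‖)⌋₊ : ℝ) + 1 := Nat.lt_floor_add_one _
      have h2 : ⌊r / (r - ‖a‖)⌋₊ + 1 ≤ 2 ^ (k + 1) := Nat.lt_pow_succ_log_self one_lt_two _
      calc r / (r - ‖a‖) < (⌊r / (r - ‖a‖)⌋₊ : ℝ) + 1 := h1
        _ ≤ ((2 ^ (k+1) : ℕ) : ℝ) := by exact_mod_cast h2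
        _ = (2:ℝ) ^ (k+1) := by push_cast; ring
    refine mem_iUnion.2 ⟨k, ?_, ?_⟩
    · rw [mem_ball_zero_iff]
      have h1 : r < (r - ‖a‖) * 2 ^ (k+1) := by
        rw [div_lt_iff₀ hra] at hup; linarith
      have h3 : r * (2⁻¹:ℝ) ^ (k+1) < r - ‖a‖ := by
        rw [inv_pow, ← div_eq_mul_inv, div_lt_iff₀ (by positivity)]
        linarith
      nlinarith
    · rw [mem_ball_zero_iff, not_lt]
      have h1 : (2:ℝ) ^ k * (r - ‖a‖) ≤ r := by
        rw [le_div_iff₀ hra] at hlow; linarith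
      have h3 : r - ‖a‖ ≤ r * (2⁻¹:ℝ) ^ k := by
        rw [inv_pow, ← div_eq_mul_inv, le_div_iff₀ (by positivity)]
        nlinarith
      nlinarith
  have key : ∀ k : ℕ, (r * (2⁻¹:ℝ) ^ (k+1)) ^ (-s) *
      (r ^ (m+1 : ℕ) * ((m:ℝ)+1) * (2⁻¹:ℝ) ^ (k+1)) =
      ((m:ℝ)+1) * ((2⁻¹:ℝ) ^ (1-s)) ^ (k+1) * r ^ ((m:ℝ) + 1 - s) := by
    intro k
    have hr2 : (0:ℝ) ≤ 2⁻¹ := by norm_num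
    have e1 : r ^ (-s) * r ^ ((m+1 : ℕ) : ℝ) = r ^ ((m:ℝ) + 1 - s) := by
      rw [← Real.rpow_add hr]; congr 1; push_cast; ring
    have e2 : (2⁻¹:ℝ) ^ (((k+1:ℕ):ℝ) * (-s)) * (2⁻¹:ℝ) ^ ((k+1:ℕ):ℝ) =
        (2⁻¹:ℝ) ^ ((1-s) * ((k+1:ℕ):ℝ)) := by
      rw [← Real.rpow_add (by norm_num : (0:ℝ) < 2⁻¹)]; congr 1; ring
    rw [← Real.rpow_natCast r (m+1), ← Real.rpow_natCast ((2⁻¹:ℝ)) (k+1),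
      ← Real.rpow_natCast ((2⁻¹:ℝ) ^ (1-s)) (k+1),
      Real.mul_rpow hr.le (by positivity), ← Real.rpow_mul hr2, ← Real.rpow_mul hr2,
      ← e1, ← e2]
    ring
  calc ∫⁻ a in ball (0 : EuclideanSpace ℝ (Fin (m + 1))) r,
        ENNReal.ofReal ((r - ‖a‖) ^ (-s))
      ≤ ∫⁻ a in ⋃ k, S k, ENNReal.ofReal ((r - ‖a‖) ^ (-s)) := lintegral_mono_set hcover
    _ ≤ ∑' k, ∫⁻ a in S k, ENNReal.ofReal ((r - ‖a‖) ^ (-s)) := lintegral_iUnion_le _ _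
    _ ≤ ∑' k, ENNReal.ofReal ((r * (2⁻¹:ℝ) ^ (k+1)) ^ (-s)) * volume (S k) := by
        refine ENNReal.tsum_le_tsum fun k => ?_
        have hmono : ∀ a ∈ S k, ENNReal.ofReal ((r - ‖a‖) ^ (-s)) ≤
            ENNReal.ofReal ((r * (2⁻¹:ℝ) ^ (k+1)) ^ (-s)) := by
          intro a hak
          have h1 : ‖a‖ < r * (1 - (2⁻¹:ℝ) ^ (k+1)) := by
            have := hak.1; rwa [mem_ball_zero_iff] at this
          have h2 : r * (2⁻¹:ℝ) ^ (k+1) ≤ r - ‖a‖ := by nlinarith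
          exact ENNReal.ofReal_le_ofReal
            (Real.rpow_le_rpow_of_nonpos (by positivity) h2 (by linarith))
        calc ∫⁻ a in S k, ENNReal.ofReal ((r - ‖a‖) ^ (-s))
            ≤ ∫⁻ _a in S k, ENNReal.ofReal ((r * (2⁻¹:ℝ) ^ (k+1)) ^ (-s)) :=
              setLIntegral_mono' (measurableSet_ball.diff measurableSet_ball) hmono
          _ = ENNReal.ofReal ((r * (2⁻¹:ℝ) ^ (k+1)) ^ (-s)) * volume (S k) :=
              setLIntegral_const _ _
    _ ≤ ∑' k, ENNReal.ofReal ((r * (2⁻¹:ℝ) ^ (k+1)) ^ (-s)) *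
          (ENNReal.ofReal (r ^ (m+1 : ℕ) * ((m:ℝ)+1) * (2⁻¹:ℝ) ^ (k+1)) * B) := by
        refine ENNReal.tsum_le_tsum fun k => ?_
        refine mul_le_mul_right ?_ _
        have hsub : ball (0 : EuclideanSpace ℝ (Fin (m + 1))) (r * (1 - (2⁻¹:ℝ) ^ k)) ⊆
            ball (0 : EuclideanSpace ℝ (Fin (m + 1))) (r * (1 - (2⁻¹:ℝ) ^ (k+1))) :=
          ball_subset_ball (by nlinarith [hcmono k])
        have hdiff : volume (S k) =
            volume (ball (0 : EuclideanSpace ℝ (Fin (m + 1))) (r * (1 - (2⁻¹:ℝ) ^ (k+1)))) -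
            volume (ball (0 : EuclideanSpace ℝ (Fin (m + 1))) (r * (1 - (2⁻¹:ℝ) ^ k))) := by
          rw [hS]
          exact measure_diff hsub measurableSet_ball.nullMeasurableSet
            measure_ball_lt_top.ne
        rw [hdiff, Measure.addHaar_ball _ _
            (mul_nonneg hr.le (hcnn (k+1))),
          Measure.addHaar_ball _ _ (mul_nonneg hr.le (hcnn k)),
          finrank_euclideanSpace_fin]
        rw [tsub_le_iff_right, ← add_mul]
        refine mul_le_mul_left ?_ _
        rw [← ENNReal.ofReal_add (by positivity)
          (pow_nonneg (mul_nonneg hr.le (hcnn k)) (m+1))]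
        refine ENNReal.ofReal_le_ofReal ?_
        have hp := pow_sub_pow_le_aux (m+1) (hcnn k) (hcmono k) (hc1 (k+1))
        push_cast at hp
        have hdc : (1 - (2⁻¹:ℝ)^(k+1)) - (1 - (2⁻¹:ℝ)^k) = (2⁻¹:ℝ)^(k+1) := by ring
        rw [hdc] at hp
        have hrm : (0:ℝ) ≤ r ^ (m+1) := by positivity
        have h5 := mul_le_mul_of_nonneg_left hp hrm
        rw [mul_pow, mul_pow]
        nlinarith [h5]
    _ = ∑' k, (ENNReal.ofReal ((m:ℝ)+1) * x ^ (k+1)) * (B * ENNReal.ofReal (r ^ ((m:ℝ) + 1 - s))) := by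
        congr 1; funext k
        rw [← mul_assoc, ← ENNReal.ofReal_mul (by positivity), key k, hx,
          ← ENNReal.ofReal_pow (by positivity),
          ENNReal.ofReal_mul (by positivity), ENNReal.ofReal_mul (by positivity)]
        ring
    _ = ENNReal.ofReal ((m:ℝ)+1) * (x * (1 - x)⁻¹) * B * ENNReal.ofReal (r ^ ((m + 1 : ℝ) - s)) := by
        rw [ENNReal.tsum_mul_right, ENNReal.tsum_mul_left, ENNReal.tsum_geometric_add_one]
        ring


lemma projPrime_apply (x : V d) (i : Fin (d + 1)) : projPrime x i = x i.castSucc := rfl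

lemma projPrime_sub (x y : V d) : projPrime (x - y) = projPrime x - projPrime y := by
  ext i
  simp only [projPrime_apply, PiLp.sub_apply]

lemma norm_projPrime_le (z : V d) : ‖projPrime z‖ ≤ ‖z‖ := by
  rw [EuclideanSpace.norm_eq, EuclideanSpace.norm_eq]
  apply Real.sqrt_le_sqrt
  calc ∑ i : Fin (d+1), ‖projPrime z i‖ ^ 2
      = ∑ j ∈ Finset.univ.image Fin.castSucc, ‖z j‖ ^ 2 := by
        rw [Finset.sum_image (fun a _ b _ h => Fin.castSucc_injective _ h)]
        simp [projPrime_apply]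
    _ ≤ ∑ j : Fin (d+2), ‖z j‖ ^ 2 :=
        Finset.sum_le_sum_of_subset_of_nonneg (Finset.subset_univ _)
          (fun j _ _ => sq_nonneg _)

lemma lipschitz_projPrime : LipschitzWith 1 (projPrime (d := d)) := by
  refine LipschitzWith.of_dist_le_mul fun x y => ?_
  rw [dist_eq_norm, dist_eq_norm, ← projPrime_sub, NNReal.coe_one, one_mul]
  exact norm_projPrime_le _

def psi (d : ℕ) : V d ≃ᵐ ℝ × EuclideanSpace ℝ (Fin (d + 1)) :=
  ((MeasurableEquiv.toLp 2 (Fin (d+2) → ℝ)).symm.trans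
    (MeasurableEquiv.piFinSuccAbove (fun _ : Fin (d+2) => ℝ) (Fin.last (d+1)))).trans
    ((MeasurableEquiv.refl ℝ).prodCongr (MeasurableEquiv.toLp 2 (Fin (d+1) → ℝ)).symm.symm)

lemma psi_apply (x : V d) : psi d x = (lastCoord x, projPrime x) := by
  refine Prod.ext rfl ?_
  show (WithLp.equiv 2 (Fin (d+1) → ℝ)).symm
    (Fin.removeNth (Fin.last (d+1)) ((MeasurableEquiv.toLp 2 (Fin (d+2) → ℝ)).symm x)) = _
  unfold projPrime
  congr 1
  funext i
  show x ((Fin.last (d+1)).succAbove i) = x i.castSucc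
  rw [Fin.succAbove_last]

lemma psi_measurePreserving : MeasurePreserving (psi d) volume volume := by
  have mp1 : MeasurePreserving (MeasurableEquiv.toLp 2 (Fin (d+2) → ℝ)).symm volume volume :=
    EuclideanSpace.volume_preserving_symm_measurableEquiv_toLp _
  have mp2 : MeasurePreserving
      (MeasurableEquiv.piFinSuccAbove (fun _ : Fin (d+2) => ℝ) (Fin.last (d+1)))
      volume volume :=
    MeasureTheory.volume_preserving_piFinSuccAbove _ _
  have mp3 : MeasurePreserving
      ((MeasurableEquiv.refl ℝ).prodCongr (MeasurableEquiv.toLp 2 (Fin (d+1) → ℝ)).symm.symm)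
      volume volume := by
    rw [Measure.volume_eq_prod, Measure.volume_eq_prod]
    exact (MeasurePreserving.id volume).prod
      ((EuclideanSpace.volume_preserving_symm_measurableEquiv_toLp (Fin (d+1))).symm _)
  exact (mp3.comp mp2).comp mp1


/-- **Interaction bound between a thin cylinder and its lateral complement** (Lemma 4.2). -/
theorem thin_cylinder_lateral_interaction (d : ℕ) (s : ℝ) (hs : s ∈ Ioo (0:ℝ) 1) :
    ∃ C : ℝ, 0 < C ∧ ∀ r t : ℝ, 0 < r → 0 < t →
      (∫⁻ p in ({x : V d | ‖projPrime x‖ < r ∧ lastCoord x ∈ Ioo 0 t} ×ˢ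
          {y : V d | r < ‖projPrime y‖ ∧ lastCoord y ∈ Ioo 0 t}),
        ENNReal.ofReal (‖p.1 - p.2‖ ^ (-((d : ℝ) + 2 + s)))) ≤
      ENNReal.ofReal (C * t * r ^ ((d : ℝ) + 1 - s)) := by
  obtain ⟨hs0, hs1⟩ := hs
  obtain ⟨C₁, hC₁top, hC₁⟩ := tail_bound (d+1) s hs0 (p := (d:ℝ)+2+s) (by push_cast; ring)
  obtain ⟨C₂, hC₂top, hC₂⟩ := ball_bound d s hs0 hs1
  refine ⟨(C₁ * C₂).toReal + 1, by positivity, ?_⟩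
  intro r t hr ht
  set D := {x : V d | ‖projPrime x‖ < r ∧ lastCoord x ∈ Ioo 0 t} with hD
  set F := {y : V d | r < ‖projPrime y‖ ∧ lastCoord y ∈ Ioo 0 t} with hF
  have hprojc : Continuous fun x : V d => ‖projPrime x‖ :=
    continuous_norm.comp lipschitz_projPrime.continuous
  have hmeasD : MeasurableSet D := by
    rw [hD, setOf_and]
    exact (measurableSet_lt hprojc.measurable measurable_const).inter
      (continuous_lastCoord.measurable measurableSet_Ioo)
  have hfmeas : Measurable fun p : V d × V d =>
      ENNReal.ofReal (‖p.1 - p.2‖ ^ (-((d:ℝ)+2+s))) := by fun_prop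
  have hgmeas : Measurable fun p : ℝ × EuclideanSpace ℝ (Fin (d+1)) =>
      ENNReal.ofReal ((r - ‖p.2‖) ^ (-s)) := by fun_prop
  have inner_bound : ∀ x ∈ D, (∫⁻ y in F, ENNReal.ofReal (‖x - y‖ ^ (-((d:ℝ)+2+s))))
      ≤ C₁ * ENNReal.ofReal ((r - ‖projPrime x‖) ^ (-s)) := by
    intro x hx
    have hδ : 0 < r - ‖projPrime x‖ := sub_pos.2 hx.1
    have hsubset : F ⊆ (ball x (r - ‖projPrime x‖))ᶜ := by
      intro y hy
      rw [mem_compl_iff, mem_ball, not_lt]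
      have h1 : ‖projPrime y‖ - ‖projPrime x‖ ≤ ‖projPrime y - projPrime x‖ :=
        norm_sub_norm_le _ _
      have h2 : ‖projPrime y - projPrime x‖ = ‖projPrime (y - x)‖ := by rw [projPrime_sub]
      have h3 : ‖projPrime (y - x)‖ ≤ ‖y - x‖ := norm_projPrime_le _
      have h4 : dist y x = ‖y - x‖ := dist_eq_norm y x
      have h5 : r < ‖projPrime y‖ := hy.1
      linarith
    calc (∫⁻ y in F, ENNReal.ofReal (‖x - y‖ ^ (-((d:ℝ)+2+s))))
        ≤ ∫⁻ y in (ball x (r - ‖projPrime x‖))ᶜ,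
            ENNReal.ofReal (‖x - y‖ ^ (-((d:ℝ)+2+s))) := lintegral_mono_set hsubset
      _ = ∫⁻ z in (ball (0 : V d) (r - ‖projPrime x‖))ᶜ,
            ENNReal.ofReal (‖z‖ ^ (-((d:ℝ)+2+s))) := by
          have hT : MeasurePreserving (fun y : V d => x - y) volume volume :=
            Measure.measurePreserving_sub_left volume x
          have hTemb : MeasurableEmbedding (fun y : V d => x - y) :=
            (MeasurableEquiv.subLeft x).measurableEmbedding
          have hpre : (fun y : V d => x - y) ⁻¹' (ball (0:V d) (r - ‖projPrime x‖))ᶜ =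
              (ball x (r - ‖projPrime x‖))ᶜ := by
            ext y
            simp only [mem_preimage]
            rw [mem_compl_iff, mem_compl_iff, mem_ball_zero_iff, mem_ball, dist_eq_norm,
              norm_sub_rev x y]
          rw [← hpre]
          exact hT.setLIntegral_comp_preimage_emb hTemb
            (fun z => ENNReal.ofReal (‖z‖ ^ (-((d:ℝ)+2+s)))) _
      _ ≤ C₁ * ENNReal.ofReal ((r - ‖projPrime x‖) ^ (-s)) := hC₁ _ hδ
  rw [Measure.volume_eq_prod, ← Measure.prod_restrict, lintegral_prod _ hfmeas.aemeasurable]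
  calc ∫⁻ x in D, ∫⁻ y in F, ENNReal.ofReal (‖x - y‖ ^ (-((d:ℝ)+2+s)))
      ≤ ∫⁻ x in D, C₁ * ENNReal.ofReal ((r - ‖projPrime x‖) ^ (-s)) :=
        setLIntegral_mono' hmeasD inner_bound
    _ = C₁ * ∫⁻ x in D, ENNReal.ofReal ((r - ‖projPrime x‖) ^ (-s)) :=
        lintegral_const_mul' _ _ hC₁top
    _ = C₁ * ∫⁻ p in Ioo 0 t ×ˢ ball (0 : EuclideanSpace ℝ (Fin (d+1))) r,
          ENNReal.ofReal ((r - ‖p.2‖) ^ (-s)) := by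
        congr 1
        have hpre : (psi d) ⁻¹' (Ioo 0 t ×ˢ ball (0 : EuclideanSpace ℝ (Fin (d+1))) r) = D := by
          ext x
          simp only [mem_preimage, psi_apply, mem_prod, mem_ball_zero_iff, hD, mem_setOf_eq]
          tauto
        rw [← hpre]
        rw [← psi_measurePreserving.setLIntegral_comp_preimage_emb
          (psi d).measurableEmbedding
          (fun p : ℝ × EuclideanSpace ℝ (Fin (d+1)) => ENNReal.ofReal ((r - ‖p.2‖) ^ (-s)))
          (Ioo 0 t ×ˢ ball 0 r)]
        refine lintegral_congr fun x => ?_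
        rw [psi_apply]
    _ = C₁ * (ENNReal.ofReal t *
          ∫⁻ a in ball (0 : EuclideanSpace ℝ (Fin (d+1))) r,
            ENNReal.ofReal ((r - ‖a‖) ^ (-s))) := by
        congr 1
        rw [Measure.volume_eq_prod, ← Measure.prod_restrict,
          lintegral_prod _ hgmeas.aemeasurable]
        simp only
        rw [setLIntegral_const, Real.volume_Ioo, sub_zero, mul_comm]
    _ ≤ C₁ * (ENNReal.ofReal t * (C₂ * ENNReal.ofReal (r ^ ((d:ℝ) + 1 - s)))) := by
        exact mul_le_mul_right (mul_le_mul_right (hC₂ r hr) _) _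
    _ = (C₁ * C₂) * (ENNReal.ofReal t * ENNReal.ofReal (r ^ ((d:ℝ) + 1 - s))) := by ring
    _ ≤ ENNReal.ofReal ((C₁ * C₂).toReal + 1) *
          (ENNReal.ofReal t * ENNReal.ofReal (r ^ ((d:ℝ) + 1 - s))) := by
        refine mul_le_mul_left ?_ _
        conv_lhs => rw [← ENNReal.ofReal_toReal (ENNReal.mul_ne_top hC₁top hC₂top)]
        exact ENNReal.ofReal_le_ofReal (by linarith)
    _ = ENNReal.ofReal (((C₁ * C₂).toReal + 1) * t * r ^ ((d:ℝ) + 1 - s)) := by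
        rw [← ENNReal.ofReal_mul ht.le, ← ENNReal.ofReal_mul (by positivity)]
        congr 1
        ring


end Capillarity
end
end

section
/- Let n ≥ 2, s₁, s₂ ∈ (0,1), λ ≥ 1, ϱ ∈ (0,∞], σ ∈ ℝ, K₁ ∈ 𝐊(n,s₁,λ,ϱ), K₂ ∈ 𝐊(n,s₂,λ,ϱ), and let Ω ⊆ ℝⁿ be open with I_{K₂}(Ω,Ωᶜ) < +∞. If E_j ⊆ Ω is a sequence of measurable sets and E_j → E in L¹(Ω), then liminf_{j→+∞} ℰ(E_j) ≥ ℰ(E). -/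
open Set MeasureTheory Metric Filter Bornology
open scoped ENNReal NNReal Topology symmDiff RealInnerProductSpace

noncomputable section

namespace Capillarity

section LSCAux

variable {d : ℕ}

private lemma interE_mono_left (K : V d → ℝ) {A A' : Set (V d)} (B : Set (V d)) (h : A ⊆ A') :
    interE K A B ≤ interE K A' B :=
  lintegral_mono_set (Set.prod_mono_left h)

private lemma interE_union_le (K : V d → ℝ) (A A' B : Set (V d)) :
    interE K (A ∪ A') B ≤ interE K A B + interE K A' B := by
  unfold interE
  rw [Set.union_prod]
  exact lintegral_union_le _ _ _

private lemma kern_meas {K : V d → ℝ} (hK : Measurable K) :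
    Measurable fun p : V d × V d => ENNReal.ofReal (K (p.1 - p.2)) :=
  (hK.comp (measurable_fst.sub measurable_snd)).ennreal_ofReal

private lemma interE_eq_iterated (K : V d → ℝ) (hK : Measurable K) (A B : Set (V d)) :
    interE K A B = ∫⁻ x in A, ∫⁻ y in B, ENNReal.ofReal (K (x - y)) := by
  rw [interE, Measure.volume_eq_prod, ← Measure.prod_restrict,
    MeasureTheory.lintegral_prod _ (kern_meas hK).aemeasurable]

/-- Absolute continuity: the `K`-interaction with `Ωᶜ` of a small subset of `Ω` is small. -/
private lemma tendsto_interE_compl (K : V d → ℝ) (hK : Measurable K)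
    {Ω : Set (V d)} (hΩ : MeasurableSet Ω) (hfin : interE K Ω Ωᶜ < ⊤)
    {S : ℕ → Set (V d)} (hSm : ∀ j, MeasurableSet (S j)) (hS : ∀ j, S j ⊆ Ω)
    (hconv : Tendsto (fun j => volume (S j)) atTop (𝓝 0)) :
    Tendsto (fun j => interE K (S j) Ωᶜ) atTop (𝓝 0) := by
  set H : V d → ℝ≥0∞ := fun x => ∫⁻ y in Ωᶜ, ENNReal.ofReal (K (x - y)) with hH
  have key : Tendsto (fun j => ∫⁻ x in S j, H x ∂(volume.restrict Ω)) atTop (𝓝 0) := by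
    refine tendsto_setLIntegral_zero ?_ ?_
    · have : ∫⁻ x, H x ∂(volume.restrict Ω) = interE K Ω Ωᶜ := by
        rw [interE_eq_iterated K hK]
      rw [this]; exact hfin.ne
    · have : ∀ j, (volume.restrict Ω) (S j) = volume (S j) := by
        intro j
        rw [Measure.restrict_apply (hSm j), Set.inter_eq_left.mpr (hS j)]
      simpa only [Function.comp_def, this] using hconv
  have : ∀ j, ∫⁻ x in S j, H x ∂(volume.restrict Ω) = interE K (S j) Ωᶜ := by
    intro j
    rw [Measure.restrict_restrict (hSm j), Set.inter_eq_left.mpr (hS j),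
      interE_eq_iterated K hK]
  simpa only [this] using key

private lemma eventually_mem_iff_of_tendsto_indicator {A : ℕ → Set (V d)} {E : Set (V d)}
    {x : V d}
    (h : Tendsto (fun j => (A j).indicator (fun _ => (1:ℝ)) x) atTop
      (𝓝 (E.indicator (fun _ => (1:ℝ)) x))) :
    ∀ᶠ j in atTop, (x ∈ A j ↔ x ∈ E) := by
  have h1 : ∀ᶠ j in atTop,
      dist ((A j).indicator (fun _ => (1:ℝ)) x) (E.indicator (fun _ => (1:ℝ)) x) < 1 :=
    h (Metric.ball_mem_nhds _ one_pos)
  filter_upwards [h1] with j hj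
  by_cases hA : x ∈ A j <;> by_cases hE : x ∈ E <;>
    simp_all [Set.indicator_of_mem, Set.indicator_of_notMem, Real.dist_eq]

/-- Fatou's lemma for the first interaction term. -/
private lemma fatou_interE (K : V d → ℝ) (hK : Measurable K)
    {Ω : Set (V d)} (hΩ : MeasurableSet Ω)
    {A : ℕ → Set (V d)} (hAm : ∀ j, MeasurableSet (A j))
    {E : Set (V d)} (hEm : MeasurableSet E)
    (hae : ∀ᵐ x : V d, ∀ᶠ j in atTop, (x ∈ A j ↔ x ∈ E)) :
    interE K E (Ω \ E) ≤ atTop.liminf fun j => interE K (A j) (Ω \ A j) := by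
  set g : V d × V d → ℝ≥0∞ := fun p => ENNReal.ofReal (K (p.1 - p.2)) with hg
  have hgm : Measurable g := kern_meas hK
  set f : ℕ → V d × V d → ℝ≥0∞ := fun j => (A j ×ˢ (Ω \ A j)).indicator g with hf
  have hfm : ∀ j, Measurable (f j) :=
    fun j => hgm.indicator ((hAm j).prod (hΩ.diff (hAm j)))
  have hint : ∀ j, interE K (A j) (Ω \ A j) = ∫⁻ p, f j p := by
    intro j
    rw [hf, lintegral_indicator ((hAm j).prod (hΩ.diff (hAm j)))]
    rfl
  have hintE : interE K E (Ω \ E) = ∫⁻ p, (E ×ˢ (Ω \ E)).indicator g p := by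
    rw [lintegral_indicator (hEm.prod (hΩ.diff hEm))]
    rfl
  have haeP : ∀ᵐ p : V d × V d,
      (∀ᶠ j in atTop, (p.1 ∈ A j ↔ p.1 ∈ E)) ∧ ∀ᶠ j in atTop, (p.2 ∈ A j ↔ p.2 ∈ E) := by
    rw [Measure.volume_eq_prod]
    exact (Measure.quasiMeasurePreserving_fst.ae hae).and
      (Measure.quasiMeasurePreserving_snd.ae hae)
  have hlim : ∀ᵐ p : V d × V d,
      (E ×ˢ (Ω \ E)).indicator g p = atTop.liminf fun j => f j p := by
    filter_upwards [haeP] with p hp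
    have hev : ∀ᶠ j in atTop, f j p = (E ×ˢ (Ω \ E)).indicator g p := by
      filter_upwards [hp.1, hp.2] with j h1 h2
      have hmem : p ∈ A j ×ˢ (Ω \ A j) ↔ p ∈ E ×ˢ (Ω \ E) := by
        simp only [Set.mem_prod, Set.mem_diff, h1, h2]
      have hfj : f j p = (A j ×ˢ (Ω \ A j)).indicator g p := rfl
      by_cases hpE : p ∈ E ×ˢ (Ω \ E)
      · rw [hfj, Set.indicator_of_mem (hmem.mpr hpE), Set.indicator_of_mem hpE]
      · rw [hfj, Set.indicator_of_notMem (fun h => hpE (hmem.mp h)),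
          Set.indicator_of_notMem hpE]
    have : Tendsto (fun j => f j p) atTop (𝓝 ((E ×ˢ (Ω \ E)).indicator g p)) :=
      Tendsto.congr' (EventuallyEq.symm hev) tendsto_const_nhds
    exact this.liminf_eq.symm
  calc interE K E (Ω \ E) = ∫⁻ p, (E ×ˢ (Ω \ E)).indicator g p := hintE
    _ = ∫⁻ p, atTop.liminf fun j => f j p := lintegral_congr_ae hlim
    _ ≤ atTop.liminf fun j => ∫⁻ p, f j p := lintegral_liminf_le hfm
    _ = atTop.liminf fun j => interE K (A j) (Ω \ A j) := by simp only [hint]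

end LSCAux


/-- **Lower semicontinuity of the energy** (Lemma A.1). -/
theorem energy_lower_semicontinuity (d : ℕ) (s₁ s₂ lam σ : ℝ)
    (hs₁ : s₁ ∈ Ioo (0:ℝ) 1) (hs₂ : s₂ ∈ Ioo (0:ℝ) 1) (hlam : 1 ≤ lam)
    (ϱ : ℝ≥0∞) (hϱ : 0 < ϱ)
    (K₁ K₂ : V d → ℝ) (hK₁ : memK s₁ lam ϱ K₁) (hK₂ : memK s₂ lam ϱ K₂)
    (Ω : Set (V d)) (hΩo : IsOpen Ω) (hfin : interE K₂ Ω Ωᶜ < ⊤)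
    (Ej : ℕ → Set (V d)) (hEj : ∀ j, Ej j ⊆ Ω) (hEjmeas : ∀ j, MeasurableSet (Ej j))
    (E : Set (V d)) (hE : E ⊆ Ω) (hEmeas : MeasurableSet E)
    (hconv : Tendsto (fun j => volume ((Ej j ∆ E) ∩ Ω)) atTop (𝓝 0)) :
    energyE K₁ K₂ σ Ω (fun _ => 0) E ≤
      Filter.liminf (fun j => energyE K₁ K₂ σ Ω (fun _ => 0) (Ej j)) atTop := by
  classical
  have hΩm : MeasurableSet Ω := hΩo.measurableSet
  have hK₁m : Measurable K₁ := hK₁.1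
  have hK₂m : Measurable K₂ := hK₂.1
  -- finiteness of the second interaction terms
  have hfinE : interE K₂ E Ωᶜ ≠ ⊤ := ((interE_mono_left K₂ Ωᶜ hE).trans_lt hfin).ne
  have hfinj : ∀ j, interE K₂ (Ej j) Ωᶜ ≠ ⊤ :=
    fun j => ((interE_mono_left K₂ Ωᶜ (hEj j)).trans_lt hfin).ne
  -- the symmetric differences and their interactions
  set D : ℕ → Set (V d) := fun j => (Ej j ∆ E) ∩ Ω with hD
  have hDm : ∀ j, MeasurableSet (D j) := fun j => ((hEjmeas j).symmDiff hEmeas).inter hΩm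
  have hDsub : ∀ j, D j ⊆ Ω := fun j => Set.inter_subset_right
  have hdj : Tendsto (fun j => interE K₂ (D j) Ωᶜ) atTop (𝓝 0) :=
    tendsto_interE_compl K₂ hK₂m hΩm hfin hDm hDsub hconv
  have hDfin : ∀ j, interE K₂ (D j) Ωᶜ ≠ ⊤ :=
    fun j => ((interE_mono_left K₂ Ωᶜ (hDsub j)).trans_lt hfin).ne
  have hsub1 : ∀ j, Ej j ⊆ E ∪ D j := by
    intro j x hx
    by_cases hxE : x ∈ E
    · exact Or.inl hxE
    · exact Or.inr ⟨Set.mem_symmDiff.mpr (Or.inl ⟨hx, hxE⟩), hEj j hx⟩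
  have hsub2 : ∀ j, E ⊆ Ej j ∪ D j := by
    intro j x hx
    by_cases hxj : x ∈ Ej j
    · exact Or.inl hxj
    · exact Or.inr ⟨Set.mem_symmDiff.mpr (Or.inr ⟨hx, hxj⟩), hE hx⟩
  have hle1 : ∀ j, interE K₂ (Ej j) Ωᶜ ≤ interE K₂ E Ωᶜ + interE K₂ (D j) Ωᶜ :=
    fun j => (interE_mono_left K₂ Ωᶜ (hsub1 j)).trans (interE_union_le K₂ E (D j) Ωᶜ)
  have hle2 : ∀ j, interE K₂ E Ωᶜ ≤ interE K₂ (Ej j) Ωᶜ + interE K₂ (D j) Ωᶜ :=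
    fun j => (interE_mono_left K₂ Ωᶜ (hsub2 j)).trans (interE_union_le K₂ (Ej j) (D j) Ωᶜ)
  -- convergence of the second interaction terms, in ℝ
  have hdjr : Tendsto (fun j => (interE K₂ (D j) Ωᶜ).toReal) atTop (𝓝 0) := by
    have h := (ENNReal.tendsto_toReal (a := 0) (by simp)).comp hdj
    simpa [Function.comp_def] using h
  have habs : ∀ j, |(interE K₂ (Ej j) Ωᶜ).toReal - (interE K₂ E Ωᶜ).toReal| ≤
      (interE K₂ (D j) Ωᶜ).toReal := by
    intro j
    rw [abs_sub_le_iff]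
    constructor
    · have h := ENNReal.toReal_mono (ENNReal.add_ne_top.mpr ⟨hfinE, hDfin j⟩) (hle1 j)
      rw [ENNReal.toReal_add hfinE (hDfin j)] at h
      linarith
    · have h := ENNReal.toReal_mono (ENNReal.add_ne_top.mpr ⟨hfinj j, hDfin j⟩) (hle2 j)
      rw [ENNReal.toReal_add (hfinj j) (hDfin j)] at h
      linarith
  have htR : Tendsto (fun j => (interE K₂ (Ej j) Ωᶜ).toReal) atTop
      (𝓝 (interE K₂ E Ωᶜ).toReal) := by
    rw [tendsto_iff_dist_tendsto_zero]
    refine squeeze_zero (fun j => dist_nonneg) (fun j => ?_) hdjr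
    rw [Real.dist_eq]
    exact habs j
  have hcs : Tendsto (fun j => σ * (interE K₂ (Ej j) Ωᶜ).toReal) atTop
      (𝓝 (σ * (interE K₂ E Ωᶜ).toReal)) := htR.const_mul σ
  -- normal form of the energy
  have energy_eq : ∀ A : Set (V d), energyE K₁ K₂ σ Ω (fun _ => 0) A =
      ((interE K₁ A (Ω \ A) : ℝ≥0∞) : EReal) +
        ((σ * (interE K₂ A Ωᶜ).toReal : ℝ) : EReal) := by
    intro A
    simp [energyE]
  -- main argument
  rw [Filter.le_liminf_iff]
  intro y hy
  by_contra hcon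
  rw [Filter.not_eventually] at hcon
  obtain ⟨φ, hφ, hφle⟩ :=
    Filter.extraction_of_frequently_atTop (hcon.mono fun j h => not_lt.mp h)
  -- `y` is a real number
  have hne_bot : ∀ A : Set (V d), energyE K₁ K₂ σ Ω (fun _ => 0) A ≠ ⊥ := by
    intro A h
    rw [energy_eq] at h
    rcases EReal.add_eq_bot_iff.mp h with h | h
    · exact EReal.coe_ennreal_ne_bot _ h
    · exact EReal.coe_ne_bot _ h
  have hybot : y ≠ ⊥ := fun h => hne_bot (Ej (φ 0)) (le_bot_iff.mp (h ▸ hφle 0))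
  have hytop : y ≠ ⊤ := fun h => not_top_lt (h ▸ hy)
  set r : ℝ := y.toReal with hr
  have hyr : (r : EReal) = y := EReal.coe_toReal hytop hybot
  -- extract an a.e. convergent subsequence
  have hconvφ : Tendsto (fun k => volume ((Ej (φ k) ∆ E) ∩ Ω)) atTop (𝓝 0) :=
    hconv.comp hφ.tendsto_atTop
  have hTIM : TendstoInMeasure (volume.restrict Ω)
      (fun k => (Ej (φ k)).indicator fun _ => (1:ℝ)) atTop (E.indicator fun _ => (1:ℝ)) := by
    intro ε hε
    have hb : ∀ k, (volume.restrict Ω)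
        {x | ε ≤ edist ((Ej (φ k)).indicator (fun _ => (1:ℝ)) x)
          (E.indicator (fun _ => (1:ℝ)) x)} ≤ volume ((Ej (φ k) ∆ E) ∩ Ω) := by
      intro k
      rw [Measure.restrict_apply' hΩm]
      refine measure_mono fun x hx => ⟨?_, hx.2⟩
      have hd : ε ≤ edist ((Ej (φ k)).indicator (fun _ => (1:ℝ)) x)
          (E.indicator (fun _ => (1:ℝ)) x) := hx.1
      by_contra hxs
      rw [Set.mem_symmDiff] at hxs
      push_neg at hxs
      have heq : (Ej (φ k)).indicator (fun _ => (1:ℝ)) x = E.indicator (fun _ => (1:ℝ)) x := by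
        by_cases h1 : x ∈ Ej (φ k)
        · rw [Set.indicator_of_mem h1, Set.indicator_of_mem (hxs.1 h1)]
        · rw [Set.indicator_of_notMem h1,
            Set.indicator_of_notMem (fun h => h1 (hxs.2 h))]
      rw [heq, edist_self] at hd
      exact absurd hd (not_le.mpr hε)
    exact tendsto_of_tendsto_of_tendsto_of_le_of_le tendsto_const_nhds hconvφ
      (fun k => zero_le) hb
  obtain ⟨ψ, hψ, haeΩ⟩ := hTIM.exists_seq_tendsto_ae
  have hae : ∀ᵐ x : V d, ∀ᶠ k in atTop, (x ∈ Ej (φ (ψ k)) ↔ x ∈ E) := by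
    have h1 : ∀ᵐ x ∂(volume.restrict Ω), ∀ᶠ k in atTop, (x ∈ Ej (φ (ψ k)) ↔ x ∈ E) :=
      haeΩ.mono fun x hx => eventually_mem_iff_of_tendsto_indicator hx
    rw [ae_restrict_iff' hΩm] at h1
    filter_upwards [h1] with x hx
    by_cases hxΩ : x ∈ Ω
    · exact hx hxΩ
    · exact Filter.Eventually.of_forall fun k =>
        iff_of_false (fun h => hxΩ (hEj _ h)) fun h => hxΩ (hE h)
  -- Fatou for the first term
  have hFatou : interE K₁ E (Ω \ E) ≤
      atTop.liminf fun k => interE K₁ (Ej (φ (ψ k))) (Ω \ Ej (φ (ψ k))) :=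
    fatou_interE K₁ hK₁m hΩm (fun k => hEjmeas _) hEmeas hae
  -- convergence of the second term along the subsequence
  have hcsk : Tendsto (fun k => σ * (interE K₂ (Ej (φ (ψ k))) Ωᶜ).toReal) atTop
      (𝓝 (σ * (interE K₂ E Ωᶜ).toReal)) := by
    have h := hcs.comp (hφ.comp hψ).tendsto_atTop
    simpa [Function.comp_def] using h
  -- each subsequence energy is at most r
  have hky : ∀ k, ((interE K₁ (Ej (φ (ψ k))) (Ω \ Ej (φ (ψ k))) : ℝ≥0∞) : EReal)
      + ((σ * (interE K₂ (Ej (φ (ψ k))) Ωᶜ).toReal : ℝ) : EReal) ≤ (r : EReal) := by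
    intro k
    rw [hyr, ← energy_eq]
    exact hφle (ψ k)
  have hck_le : ∀ k, σ * (interE K₂ (Ej (φ (ψ k))) Ωᶜ).toReal ≤ r := by
    intro k
    have h0 : (0 : EReal) ≤ ((interE K₁ (Ej (φ (ψ k))) (Ω \ Ej (φ (ψ k))) : ℝ≥0∞) : EReal) :=
      EReal.coe_ennreal_nonneg _
    have h := le_trans (le_add_of_nonneg_left h0) (hky k)
    exact_mod_cast h
  have hcr : σ * (interE K₂ E Ωᶜ).toReal ≤ r :=
    le_of_tendsto hcsk (Filter.Eventually.of_forall hck_le)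
  have hak : ∀ k, interE K₁ (Ej (φ (ψ k))) (Ω \ Ej (φ (ψ k))) ≤
      ENNReal.ofReal (r - σ * (interE K₂ (Ej (φ (ψ k))) Ωᶜ).toReal) := by
    intro k
    have hane : interE K₁ (Ej (φ (ψ k))) (Ω \ Ej (φ (ψ k))) ≠ ⊤ := by
      intro h
      have h2 := hky k
      rw [h, EReal.coe_ennreal_top, EReal.top_add_coe] at h2
      exact EReal.coe_ne_top r (top_le_iff.mp h2)
    rw [ENNReal.le_ofReal_iff_toReal_le hane (by linarith [hck_le k])]
    have h2 := hky k
    have h3 : ((interE K₁ (Ej (φ (ψ k))) (Ω \ Ej (φ (ψ k)))).toReal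
        + σ * (interE K₂ (Ej (φ (ψ k))) Ωᶜ).toReal : ℝ) ≤ (r : ℝ) := by
      have hcoe : ((interE K₁ (Ej (φ (ψ k))) (Ω \ Ej (φ (ψ k))) : ℝ≥0∞) : EReal) =
          (((interE K₁ (Ej (φ (ψ k))) (Ω \ Ej (φ (ψ k)))).toReal : ℝ) : EReal) := by
        rw [← EReal.coe_toReal (x := ((interE K₁ (Ej (φ (ψ k))) (Ω \ Ej (φ (ψ k))) : ℝ≥0∞) : EReal))
          (by simpa [EReal.coe_ennreal_eq_top_iff] using hane) (EReal.coe_ennreal_ne_bot _),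
          EReal.toReal_coe_ennreal]
      rw [hcoe, ← EReal.coe_add] at h2
      exact_mod_cast h2
    linarith
  have hofc : Tendsto (fun k =>
        ENNReal.ofReal (r - σ * (interE K₂ (Ej (φ (ψ k))) Ωᶜ).toReal)) atTop
      (𝓝 (ENNReal.ofReal (r - σ * (interE K₂ E Ωᶜ).toReal))) :=
    (ENNReal.continuous_ofReal.tendsto _).comp (tendsto_const_nhds.sub hcsk)
  have hliminf : (atTop.liminf fun k => interE K₁ (Ej (φ (ψ k))) (Ω \ Ej (φ (ψ k)))) ≤
      ENNReal.ofReal (r - σ * (interE K₂ E Ωᶜ).toReal) := by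
    rw [← hofc.liminf_eq]
    exact Filter.liminf_le_liminf (Filter.Eventually.of_forall hak)
  have haE : interE K₁ E (Ω \ E) ≤ ENNReal.ofReal (r - σ * (interE K₂ E Ωᶜ).toReal) :=
    hFatou.trans hliminf
  have hfinal : energyE K₁ K₂ σ Ω (fun _ => 0) E ≤ y := by
    rw [energy_eq, ← hyr]
    calc ((interE K₁ E (Ω \ E) : ℝ≥0∞) : EReal) + ((σ * (interE K₂ E Ωᶜ).toReal : ℝ) : EReal)
        ≤ ((ENNReal.ofReal (r - σ * (interE K₂ E Ωᶜ).toReal) : ℝ≥0∞) : EReal) +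
          ((σ * (interE K₂ E Ωᶜ).toReal : ℝ) : EReal) :=
          add_le_add_left (EReal.coe_ennreal_le_coe_ennreal_iff.mpr haE) _
      _ = ((r - σ * (interE K₂ E Ωᶜ).toReal : ℝ) : EReal) +
          ((σ * (interE K₂ E Ωᶜ).toReal : ℝ) : EReal) := by
          rw [EReal.coe_ennreal_ofReal, max_eq_left (by linarith)]
      _ = (r : EReal) := by rw [← EReal.coe_add]; norm_num
  exact absurd hy (not_lt.mpr hfinal)

end Capillarity
end
end
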